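/- arXiv:2409.13380 — 9 statements merged into one kernel-verified Lean document; each statement's English description precedes it below -/
import Mathlib

section
/- Let G=(V,E) be a finite simple graph with unit edge weights, let χ: V → {1,…,c} be a c-coloring of G, let k be a positive integer, let v ∈ V, and let i ∈ {1,…,c}\{χ(v)} be a color such that v is (i,k)-blocked with respect to χ, i.e., |{w ∈ N(v) : χ(w) = i}| ≥ |{w ∈ N(v) : χ(w) = χ(v)}| + 2k − 1. Then there is no inclusion-minimal improving k-neighbor χ' of χ with χ'(v) = i. -/
/-!
Let `χ'` be an improving `k`-neighbor of `χ` with `χ' v = i`. Since `v` itself is flipped, at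
most `k - 1` neighbors of `v` are flipped, so under `χ'` the vertex `v` still has at least
`(2k - 1) - 2(k - 1) = 1` more neighbors of color `i` than of color `χ v`. Hence resetting `v` to
`χ v` in `χ'` strictly increases the number of properly colored edges, and gives an improving
`k`-neighbor whose flip is that of `χ'` minus `v`, contradicting minimality.
-/

open Finset
open scoped Classical

noncomputable def properEdges {V : Type*} [Fintype V] {α : Type*}
    (G : SimpleGraph V) (χ : V → α) : Finset (Sym2 V) :=
  G.edgeFinset.filter fun e => ¬ (Sym2.map χ e).IsDiag

noncomputable def flipSet {V : Type*} [Fintype V] {α : Type*}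
    (χ χ' : V → α) : Finset V :=
  univ.filter fun v => χ v ≠ χ' v

def IsImprovingKNeighbor {V : Type*} [Fintype V] {c : ℕ}
    (G : SimpleGraph V) (k : ℕ) (χ χ' : V → Fin c) : Prop :=
  (flipSet χ χ').card ≤ k ∧ (properEdges G χ).card < (properEdges G χ').card

section

variable {V α : Type*} [Fintype V]

theorem filter_properEdges_notMem_eq (G : SimpleGraph V) {ψ ψ' : V → α} {v : V}
    (h : ∀ w, w ≠ v → ψ w = ψ' w) :
    (properEdges G ψ).filter (v ∉ ·) = (properEdges G ψ').filter (v ∉ ·) := by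
  ext e
  induction e using Sym2.ind with
  | _ a b =>
    simp only [properEdges, mem_filter, Sym2.map_mk, Sym2.mk_isDiag_iff, Sym2.mem_iff, not_or]
    constructor <;> rintro ⟨⟨hab, hne⟩, ha, hb⟩
    · exact ⟨⟨hab, by rwa [← h a (Ne.symm ha), ← h b (Ne.symm hb)]⟩, ha, hb⟩
    · exact ⟨⟨hab, by rwa [h a (Ne.symm ha), h b (Ne.symm hb)]⟩, ha, hb⟩

section ProperEdges

variable (G : SimpleGraph V) [DecidableRel G.Adj]

theorem card_properEdges_eq [DecidableEq α] (ψ : V → α) (v : V) :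
    #(properEdges G ψ) = #((properEdges G ψ).filter (v ∉ ·)) +
      #((G.neighborFinset v).filter fun w => ψ w ≠ ψ v) := by
  rw [← card_filter_add_card_filter_not (p := (v ∉ ·))]
  congr 1
  symm
  refine card_bij (fun w _ => s(v, w)) ?_ (fun _ _ _ _ => Sym2.congr_right.mp) ?_
  · intro w hw
    simp only [mem_filter, SimpleGraph.mem_neighborFinset] at hw
    simp [properEdges, hw.1, Ne.symm hw.2]
  · intro e he
    induction e using Sym2.ind with
    | _ a b =>
      simp only [properEdges, mem_filter, SimpleGraph.mem_edgeFinset, SimpleGraph.mem_edgeSet,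
        Sym2.map_mk, Sym2.mk_isDiag_iff, Sym2.mem_iff, not_not] at he
      obtain ⟨⟨hab, hne⟩, rfl | rfl⟩ := he
      · exact ⟨b, by simp [hab, Ne.symm hne], rfl⟩
      · exact ⟨a, by simp [hab.symm, hne], Sym2.eq_swap⟩

theorem card_properEdges_lt_card_update [DecidableEq V] [DecidableEq α] (ψ : V → α) (v : V)
    (a : α)
    (h : #((G.neighborFinset v).filter fun w => ψ w = a) <
      #((G.neighborFinset v).filter fun w => ψ w = ψ v)) :
    #(properEdges G ψ) < #(properEdges G (Function.update ψ v a)) := by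
  have hrecolored : (G.neighborFinset v).filter (fun w =>
      Function.update ψ v a w ≠ Function.update ψ v a v) =
      (G.neighborFinset v).filter fun w => ψ w ≠ a :=
    filter_congr fun w hw => by
      have hwv : w ≠ v := (G.ne_of_adj ((G.mem_neighborFinset v w).mp hw)).symm
      rw [Function.update_self, Function.update_of_ne hwv]
  rw [card_properEdges_eq G ψ v, card_properEdges_eq G _ v, hrecolored,
    filter_properEdges_notMem_eq G fun w hw => Function.update_of_ne hw a ψ]
  have hψv := card_filter_add_card_filter_not (s := G.neighborFinset v) (fun w => ψ w = ψ v)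
  have hψa := card_filter_add_card_filter_not (s := G.neighborFinset v) (fun w => ψ w = a)
  simp only [ne_eq] at hψv hψa ⊢
  omega

end ProperEdges

theorem flipSet_comm (χ χ' : V → α) : flipSet χ χ' = flipSet χ' χ := by
  simp only [flipSet, ne_comm]

theorem flipSet_update_self [DecidableEq V] (χ χ' : V → α) (v : V) :
    flipSet χ (Function.update χ' v (χ v)) = (flipSet χ χ').erase v := by
  ext w
  by_cases hw : w = v <;> simp [flipSet, hw]

theorem card_filter_eq_le_add_card_inter_flipSet [DecidableEq V] [DecidableEq α] (s : Finset V)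
    (χ χ' : V → α) (a : α) :
    #(s.filter fun w => χ w = a) ≤ #(s.filter fun w => χ' w = a) + #(s ∩ flipSet χ χ') :=
  calc #(s.filter fun w => χ w = a)
      ≤ #((s.filter fun w => χ' w = a) ∪ s ∩ flipSet χ χ') := by
        refine card_le_card fun w hw => ?_
        simp only [mem_filter] at hw
        by_cases h : χ w = χ' w
        · simp [hw.1, ← h, hw.2]
        · simp [flipSet, hw.1, h]
    _ ≤ _ := card_union_le _ _

theorem card_inter_flipSet_lt [DecidableEq V] {s : Finset V} {χ χ' : V → α} {v : V}
    (hv : v ∈ flipSet χ χ') (hvs : v ∉ s) : #(s ∩ flipSet χ χ') < #(flipSet χ χ') :=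
  card_lt_card <| (ssubset_iff_of_subset inter_subset_right).mpr
    ⟨v, hv, fun h => hvs (mem_inter.mp h).1⟩

end

theorem no_minimal_improving_neighbor_of_blocked_general
    {V : Type*} [Fintype V] [DecidableEq V] {c : ℕ}
    (G : SimpleGraph V) [DecidableRel G.Adj]
    (χ : V → Fin c) (k : ℕ) (v : V) (i : Fin c) (hi : i ≠ χ v)
    (hblocked : ((G.neighborFinset v).filter fun w => χ w = χ v).card + 2 * k ≤
      ((G.neighborFinset v).filter fun w => χ w = i).card + 1) :
    ¬ ∃ χ' : V → Fin c,
        (IsImprovingKNeighbor G k χ χ' ∧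
          ∀ χ'' : V → Fin c, IsImprovingKNeighbor G k χ χ'' →
            ¬ flipSet χ χ'' ⊂ flipSet χ χ') ∧
        χ' v = i := by
  rintro ⟨χ', ⟨⟨hflip, himp⟩, hmin⟩, rfl⟩
  have hv : v ∈ flipSet χ χ' := by simpa [flipSet] using hi.symm
  have hflippedNeighbors := card_inter_flipSet_lt (s := G.neighborFinset v) hv (by simp)
  have hcolor_i := card_filter_eq_le_add_card_inter_flipSet (G.neighborFinset v) χ χ' (χ' v)
  have hcolor_χv := card_filter_eq_le_add_card_inter_flipSet (G.neighborFinset v) χ' χ (χ v)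
  rw [flipSet_comm χ' χ] at hcolor_χv
  have hgain := card_properEdges_lt_card_update G χ' v (χ v) (by omega)
  have hsmaller : flipSet χ (Function.update χ' v (χ v)) ⊂ flipSet χ χ' := by
    rw [flipSet_update_self]
    exact erase_ssubset hv
  exact hmin _ ⟨(card_le_card hsmaller.subset).trans hflip, himp.trans hgain⟩ hsmaller

/-- If a vertex `v` is `(i,k)`-blocked with respect to `χ` (it has at least
`2k - 1` more neighbors of color `i` than of color `χ v`), then no
inclusion-minimal improving `k`-neighbor `χ'` of `χ` satisfies `χ' v = i`. -/
theorem no_minimal_improving_neighbor_of_blocked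
    {V : Type*} [Fintype V] [DecidableEq V] {c : ℕ}
    (G : SimpleGraph V) [DecidableRel G.Adj]
    (χ : V → Fin c) (k : ℕ) (hk : 1 ≤ k) (v : V) (i : Fin c) (hi : i ≠ χ v)
    (hblocked : ((G.neighborFinset v).filter fun w => χ w = χ v).card + 2 * k ≤
      ((G.neighborFinset v).filter fun w => χ w = i).card + 1) :
    ¬ ∃ χ' : V → Fin c,
        (IsImprovingKNeighbor G k χ χ' ∧
          ∀ χ'' : V → Fin c, IsImprovingKNeighbor G k χ χ'' →
            ¬ flipSet χ χ'' ⊂ flipSet χ χ') ∧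
        χ' v = i :=
  no_minimal_improving_neighbor_of_blocked_general G χ k v i hi hblocked
end

section
/- Let G=(V,E) be a finite simple graph, ω: E → ℚ an edge-weight function, χ: V → {1,…,c} a c-coloring, and S ⊆ V. For v ∈ S and i ∈ {1,…,c} let θ_v^i := ω({{v,w} ∈ E : w ∈ N(v)\S, χ(w) ≠ i}). For S' ⊆ S and c' ∈ {1,…,c}, define T[S',c'] as the maximum, over all functions σ: S' → {1,…,c'}, of the total weight of those edges of E that have at least one endpoint in S' and no endpoint in S\S' and that are properly colored under the coloring equal to σ on S' and equal to χ on V\S. Then T[S',1] = Σ_{v ∈ S'} θ_v^1, and for every c' with 2 ≤ c' ≤ c, T[S',c'] = max_{S'' ⊆ S'} ( T[S'\S'', c'−1] + ω(E(S'', S'\S'')) + Σ_{v ∈ S''} θ_v^{c'} ), where E(S'', S'\S'') denotes the set of edges of G with one endpoint in S'' and the other endpoint in S'\S''. -/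
/-!
Fix an optimal recolouring `σ` of `S'` with colours `1, …, c'` and let `S''` be its colour
class `c'`. The edges counted for `S'` split into the edges counted for `S' \ S''` (they only
see `σ` on `S' \ S''`, a colouring with `c' - 1` colours), the edges between `S''` and
`S' \ S''` (all proper, since `c'` is used only on `S''`), the edges inside `S''` (all
improper) and the edges from `S''` to `V \ S`, which are proper exactly when the outer endpoint
is not coloured `c'`; the last ones weigh `∑ v ∈ S'', θ v c'`. Conversely, colouring any
`S'' ⊆ S'` with `c'` and `S' \ S''` optimally with `c' - 1` colours realises each term of the
maximum. For `c' = 1` all of `S'` is one colour class.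
-/

open Finset
open scoped Classical

namespace SimpleGraph

variable {V M α : Type*} [Fintype V] [DecidableEq V] [AddCommMonoid M] (G : SimpleGraph V)

theorem sum_sum_neighborFinset_filter_eq_sum_edgeFinset (A : Finset V) (p : V → Prop)
    [DecidablePred p] (hA : ∀ v ∈ A, ¬ p v) (f : Sym2 V → M) :
    ∑ v ∈ A, ∑ w ∈ (G.neighborFinset v).filter p, f s(v, w) =
      ∑ e ∈ G.edgeFinset.filter (fun e => ∃ v ∈ e, ∃ w ∈ e, v ∈ A ∧ p w), f e := by
  rw [sum_sigma']
  refine sum_bij (fun x _ => s(x.1, x.2)) ?_ ?_ ?_ (fun _ _ => rfl)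
  · rintro ⟨v, w⟩ hvw
    simp only [mem_sigma, mem_filter, mem_neighborFinset] at hvw
    simp only [mem_filter, mem_edgeFinset, mem_edgeSet]
    exact ⟨hvw.2.1, v, Sym2.mem_mk_left v w, w, Sym2.mem_mk_right v w, hvw.1, hvw.2.2⟩
  · rintro ⟨v, w⟩ hvw ⟨v', w'⟩ hvw' h
    simp only [mem_sigma, mem_filter] at hvw hvw'
    rcases Sym2.eq_iff.1 h with ⟨rfl, rfl⟩ | ⟨rfl, rfl⟩
    · rfl
    · exact absurd hvw'.2.2 (hA _ hvw.1)
  · intro e he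
    simp only [mem_filter] at he
    obtain ⟨he, v, hve, w, hwe, hv, hw⟩ := he
    have hvw : v ≠ w := by rintro rfl; exact hA v hv hw
    obtain rfl := (Sym2.mem_and_mem_iff hvw).1 ⟨hve, hwe⟩
    rw [mem_edgeFinset, mem_edgeSet] at he
    exact ⟨⟨v, w⟩, by simpa only [mem_sigma, mem_filter, mem_neighborFinset] using ⟨hv, he, hw⟩,
      rfl⟩

theorem filter_between_and_not_isDiag [DecidableEq α] (s : Finset (Sym2 V)) {B C : Finset V}
    {τ : V → α} {k : α} (hB : ∀ v ∈ B, τ v = k) (hC : ∀ v ∈ C, τ v ≠ k) :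
    s.filter (fun e => ((∃ x ∈ e, x ∈ B) ∧ (∃ y ∈ e, y ∈ C)) ∧ ¬ (e.map τ).IsDiag) =
      s.filter (fun e => (∃ x ∈ e, x ∈ B) ∧ (∃ y ∈ e, y ∈ C)) := by
  refine filter_congr fun e _ => and_iff_left_of_imp fun ⟨⟨x, hxe, hx⟩, ⟨y, hye, hy⟩⟩ => ?_
  have hxy : x ≠ y := by rintro rfl; exact hC x hy (hB x hx)
  rw [(Sym2.mem_and_mem_iff hxy).1 ⟨hxe, hye⟩, Sym2.map_mk, Sym2.mk_isDiag_iff, hB x hx]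
  exact (hC y hy).symm

variable (ω : Sym2 V → M) (S : Finset V)

noncomputable def regionWeight [DecidableEq α] (A : Finset V) (τ : V → α) : M :=
  ∑ e ∈ G.edgeFinset.filter (fun e =>
    (∃ u ∈ e, u ∈ A) ∧ (∀ u ∈ e, u ∉ S \ A) ∧ ¬ (e.map τ).IsDiag), ω e

/-- `T[A, c']` is the greatest element of this set. -/
def recolorWeights (χ : V → ℕ) (A : Finset V) (c' : ℕ) : Set M :=
  {x | ∃ σ : V → ℕ, (∀ v ∈ A, σ v ∈ Icc 1 c') ∧
    x = G.regionWeight ω S A (fun v => if v ∈ A then σ v else χ v)}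

variable {G ω S} [DecidableEq α]

theorem regionWeight_congr {A : Finset V} {τ τ' : V → α} (h : ∀ v, v ∈ A ∨ v ∉ S → τ v = τ' v) :
    G.regionWeight ω S A τ = G.regionWeight ω S A τ' := by
  refine sum_congr (filter_congr fun e _ => and_congr_right fun _ => and_congr_right fun he => ?_)
    fun _ _ => rfl
  rw [Sym2.map_congr fun v hv => h v ?_]
  by_cases hvS : v ∈ S
  · exact .inl (by simpa [hvS] using he v hv)
  · exact .inr hvS

theorem regionWeight_union {B C : Finset V} (hB : B ⊆ S) (hC : C ⊆ S) (hBC : Disjoint B C)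
    (τ : V → α) :
    G.regionWeight ω S (B ∪ C) τ = G.regionWeight ω S B τ + G.regionWeight ω S C τ +
      ∑ e ∈ G.edgeFinset.filter (fun e =>
        ((∃ x ∈ e, x ∈ B) ∧ (∃ y ∈ e, y ∈ C)) ∧ ¬ (e.map τ).IsDiag), ω e := by
  simp only [regionWeight, sum_filter, ← sum_add_distrib]
  refine sum_congr rfl fun e _ => ?_
  induction e using Sym2.ind with | _ a b => ?_
  have ha := @hB a
  have hb := @hB b
  have ha' := @hC a
  have hb' := @hC b
  have hab : a ∈ B → a ∉ C := fun h => Finset.disjoint_left.1 hBC h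
  have hba : b ∈ B → b ∉ C := fun h => Finset.disjoint_left.1 hBC h
  simp only [Sym2.mem_iff, exists_eq_or_imp, exists_eq_left, forall_eq_or_imp, forall_eq,
    Sym2.map_mk, Sym2.mk_isDiag_iff, mem_sdiff, mem_union]
  by_cases a ∈ B <;> by_cases a ∈ C <;> by_cases a ∈ S <;> by_cases b ∈ B <;> by_cases b ∈ C <;>
    by_cases b ∈ S <;> simp_all

theorem regionWeight_eq_sum_neighborFinset {A : Finset V} (hA : A ⊆ S) {τ χ : V → α} {k : α}
    (hτA : ∀ v ∈ A, τ v = k) (hτS : ∀ v ∉ S, τ v = χ v) :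
    G.regionWeight ω S A τ =
      ∑ v ∈ A, ∑ w ∈ (G.neighborFinset v).filter (fun w => w ∉ S ∧ χ w ≠ k), ω s(v, w) := by
  rw [sum_sum_neighborFinset_filter_eq_sum_edgeFinset _ _ _ fun v hv hw => hw.1 (hA hv)]
  refine sum_congr (filter_congr fun e he => ?_) fun _ _ => rfl
  induction e using Sym2.ind with | _ a b => ?_
  have hab : a ≠ b := (mem_edgeSet G).1 (mem_edgeFinset.1 he) |>.ne
  have ha := @hA a
  have hb := @hA b
  have hτa := hτA a
  have hτb := hτA b
  have hχa := hτS a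
  have hχb := hτS b
  simp only [Sym2.mem_iff, exists_eq_or_imp, exists_eq_left, forall_eq_or_imp, forall_eq,
    Sym2.map_mk, Sym2.mk_isDiag_iff, mem_sdiff]
  by_cases a ∈ A <;> by_cases a ∈ S <;> by_cases b ∈ A <;> by_cases b ∈ S <;> simp_all [eq_comm]

theorem regionWeight_ite_eq_add {A B : Finset V} (hA : A ⊆ S) (hB : B ⊆ A) {σ χ : V → α}
    {k : α} (hσB : ∀ v ∈ B, σ v = k) (hσA : ∀ v ∈ A \ B, σ v ≠ k) :
    G.regionWeight ω S A (fun v => if v ∈ A then σ v else χ v) =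
      G.regionWeight ω S (A \ B) (fun v => if v ∈ A \ B then σ v else χ v) +
      ∑ e ∈ G.edgeFinset.filter (fun e => (∃ x ∈ e, x ∈ B) ∧ (∃ y ∈ e, y ∈ A \ B)), ω e +
      ∑ v ∈ B, ∑ w ∈ (G.neighborFinset v).filter (fun w => w ∉ S ∧ χ w ≠ k), ω s(v, w) := by
  set τ := fun v => if v ∈ A then σ v else χ v
  have hτB : ∀ v ∈ B, τ v = k := fun v hv => by simp [τ, hB hv, hσB v hv]
  have hτA : ∀ v ∈ A \ B, τ v ≠ k := fun v hv => by simpa [τ, (mem_sdiff.1 hv).1] using hσA v hv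
  have hτS : ∀ v ∉ S, τ v = χ v := fun v hv => if_neg fun h => hv (hA h)
  conv_lhs => rw [← union_sdiff_of_subset hB]
  rw [regionWeight_union (hB.trans hA) (sdiff_subset.trans hA) disjoint_sdiff,
    filter_between_and_not_isDiag _ hτB hτA,
    regionWeight_eq_sum_neighborFinset (hB.trans hA) hτB hτS,
    regionWeight_congr (τ' := fun v => if v ∈ A \ B then σ v else χ v)]
  · abel
  · rintro v (hv | hv)
    · simp [τ, hv, (mem_sdiff.1 hv).1]
    · have hvA : v ∉ A := fun h => hv (hA h)
      simp [τ, hvA]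

variable {χ : V → ℕ} {A : Finset V}

theorem eq_of_mem_recolorWeights_one (hA : A ⊆ S) {x : M} (hx : x ∈ G.recolorWeights ω S χ A 1) :
    x = ∑ v ∈ A, ∑ w ∈ (G.neighborFinset v).filter (fun w => w ∉ S ∧ χ w ≠ 1), ω s(v, w) := by
  obtain ⟨σ, hσ, rfl⟩ := hx
  refine regionWeight_eq_sum_neighborFinset hA (fun v hv => ?_)
    fun v hv => if_neg fun h => hv (hA h)
  simpa [hv, Nat.le_antisymm_iff, and_comm] using hσ v hv

theorem exists_eq_add_of_mem_recolorWeights (hA : A ⊆ S) {c' : ℕ} {x : M}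
    (hx : x ∈ G.recolorWeights ω S χ A c') :
    ∃ B ⊆ A, ∃ y ∈ G.recolorWeights ω S χ (A \ B) (c' - 1),
      x = y + ∑ e ∈ G.edgeFinset.filter (fun e => (∃ x ∈ e, x ∈ B) ∧ (∃ y ∈ e, y ∈ A \ B)), ω e +
        ∑ v ∈ B, ∑ w ∈ (G.neighborFinset v).filter (fun w => w ∉ S ∧ χ w ≠ c'), ω s(v, w) := by
  obtain ⟨σ, hσ, rfl⟩ := hx
  have hσB : ∀ v ∈ A \ A.filter (σ · = c'), σ v ≠ c' := by simp_all
  refine ⟨A.filter (σ · = c'), filter_subset _ _, _, ⟨σ, fun v hv => ?_, rfl⟩,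
    regionWeight_ite_eq_add hA (filter_subset _ _) (fun v hv => (mem_filter.1 hv).2) hσB⟩
  have := mem_Icc.1 (hσ v (mem_sdiff.1 hv).1)
  exact mem_Icc.2 ⟨this.1, by have := hσB v hv; omega⟩

theorem add_mem_recolorWeights (hA : A ⊆ S) {B : Finset V} (hB : B ⊆ A) {c' : ℕ} (hc' : 1 ≤ c')
    {y : M} (hy : y ∈ G.recolorWeights ω S χ (A \ B) (c' - 1)) :
    y + ∑ e ∈ G.edgeFinset.filter (fun e => (∃ x ∈ e, x ∈ B) ∧ (∃ y ∈ e, y ∈ A \ B)), ω e +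
        ∑ v ∈ B, ∑ w ∈ (G.neighborFinset v).filter (fun w => w ∉ S ∧ χ w ≠ c'), ω s(v, w) ∈
      G.recolorWeights ω S χ A c' := by
  obtain ⟨σ, hσ, rfl⟩ := hy
  set σ' := fun v => if v ∈ B then c' else σ v
  have hσ'A : ∀ v ∈ A \ B, σ' v ≠ c' := fun v hv => by
    have := mem_Icc.1 (hσ v hv); simp only [σ', if_neg (mem_sdiff.1 hv).2]; omega
  have hσ'σ : (fun v => if v ∈ A \ B then σ' v else χ v) =
      fun v => if v ∈ A \ B then σ v else χ v := by
    funext v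
    split_ifs with hv
    · exact if_neg (mem_sdiff.1 hv).2
    · rfl
  refine ⟨σ', fun v hv => ?_, ?_⟩
  · by_cases hvB : v ∈ B
    · simpa [σ', hvB] using hc'
    · have := mem_Icc.1 (hσ v (mem_sdiff.2 ⟨hv, hvB⟩))
      simp only [σ', if_neg hvB, mem_Icc]
      omega
  · rw [regionWeight_ite_eq_add hA hB (fun v hv => if_pos hv) hσ'A, hσ'σ]

end SimpleGraph

theorem dp_recurrence_general
    {V : Type*} [Fintype V] [DecidableEq V]
    (G : SimpleGraph V) (ω : Sym2 V → ℚ)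
    (c : ℕ) (hc : 1 ≤ c) (χ : V → ℕ)
    (S : Finset V)
    (θ : V → ℕ → ℚ)
    (hθ : ∀ v i, θ v i =
      ∑ w ∈ (G.neighborFinset v).filter (fun w => w ∉ S ∧ χ w ≠ i), ω s(v, w))
    (T : Finset V → ℕ → ℚ)
    (hT : ∀ S' ⊆ S, ∀ c' ∈ Finset.Icc 1 c,
      IsGreatest
        {x : ℚ | ∃ σ : V → ℕ, (∀ v ∈ S', σ v ∈ Finset.Icc 1 c') ∧
          x = ∑ e ∈ G.edgeFinset.filter (fun e =>
              (∃ u ∈ e, u ∈ S') ∧ (∀ u ∈ e, u ∉ S \ S') ∧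
              ¬ (Sym2.map (fun v => if v ∈ S' then σ v else χ v) e).IsDiag), ω e}
        (T S' c')) :
    (∀ S' ⊆ S, T S' 1 = ∑ v ∈ S', θ v 1) ∧
    (∀ S' ⊆ S, ∀ c', 2 ≤ c' → c' ≤ c →
      T S' c' = S'.powerset.sup' (Finset.powerset_nonempty S')
        (fun S'' =>
          T (S' \ S'') (c' - 1) +
          (∑ e ∈ G.edgeFinset.filter (fun e =>
              (∃ x ∈ e, x ∈ S'') ∧ (∃ y ∈ e, y ∈ S' \ S'')), ω e) +
          ∑ v ∈ S'', θ v c')) := by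
  have hT' : ∀ S' ⊆ S, ∀ c' ∈ Icc 1 c, IsGreatest (G.recolorWeights ω S χ S' c') (T S' c') := hT
  simp only [hθ]
  refine ⟨fun S' hS' =>
    SimpleGraph.eq_of_mem_recolorWeights_one hS' (hT' S' hS' 1 (mem_Icc.2 ⟨le_rfl, hc⟩)).1,
    fun S' hS' c' h2c' hc'c => ?_⟩
  have hc' : c' ∈ Icc 1 c := mem_Icc.2 ⟨by omega, hc'c⟩
  have hT'' : ∀ B ⊆ S',
      IsGreatest (G.recolorWeights ω S χ (S' \ B) (c' - 1)) (T (S' \ B) (c' - 1)) :=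
    fun B _ => hT' _ (sdiff_subset.trans hS') _ (mem_Icc.2 ⟨by omega, by omega⟩)
  refine le_antisymm ?_ (sup'_le _ _ fun B hB => ?_)
  · obtain ⟨B, hB, y, hy, hTy⟩ :=
      SimpleGraph.exists_eq_add_of_mem_recolorWeights hS' (hT' S' hS' c' hc').1
    rw [hTy]
    exact le_sup'_of_le _ (mem_powerset.2 hB) (by gcongr; exact (hT'' B hB).2 hy)
  · rw [mem_powerset] at hB
    exact (hT' S' hS' c' hc').2
      (SimpleGraph.add_mem_recolorWeights hS' hB (by omega) (hT'' B hB).1)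

/-- Recurrence of the dynamic program computing, for each `S' ⊆ S` and each
number of colors `c' ∈ [1,c]`, the maximum total weight `T[S',c']` of edges
with at least one endpoint in `S'` and no endpoint in `S \ S'` that are
properly colored when the vertices of `S'` are recolored with colors from
`[1,c']` (and all vertices outside `S` keep their color under `χ`). -/
theorem dp_recurrence
    {V : Type*} [Fintype V] [DecidableEq V]
    (G : SimpleGraph V) (ω : Sym2 V → ℚ)
    (c : ℕ) (hc : 1 ≤ c) (χ : V → ℕ) (hχ : ∀ v, χ v ∈ Finset.Icc 1 c)
    (S : Finset V)
    (θ : V → ℕ → ℚ)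
    (hθ : ∀ v i, θ v i =
      ∑ w ∈ (G.neighborFinset v).filter (fun w => w ∉ S ∧ χ w ≠ i), ω s(v, w))
    (T : Finset V → ℕ → ℚ)
    (hT : ∀ S' ⊆ S, ∀ c' ∈ Finset.Icc 1 c,
      IsGreatest
        {x : ℚ | ∃ σ : V → ℕ, (∀ v ∈ S', σ v ∈ Finset.Icc 1 c') ∧
          x = ∑ e ∈ G.edgeFinset.filter (fun e =>
              (∃ u ∈ e, u ∈ S') ∧ (∀ u ∈ e, u ∉ S \ S') ∧
              ¬ (Sym2.map (fun v => if v ∈ S' then σ v else χ v) e).IsDiag), ω e}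
        (T S' c')) :
    (∀ S' ⊆ S, T S' 1 = ∑ v ∈ S', θ v 1) ∧
    (∀ S' ⊆ S, ∀ c', 2 ≤ c' → c' ≤ c →
      T S' c' = S'.powerset.sup' (Finset.powerset_nonempty S')
        (fun S'' =>
          T (S' \ S'') (c' - 1) +
          (∑ e ∈ G.edgeFinset.filter (fun e =>
              (∃ x ∈ e, x ∈ S'') ∧ (∃ y ∈ e, y ∈ S' \ S'')), ω e) +
          ∑ v ∈ S'', θ v c')) :=
  dp_recurrence_general G ω c hc χ S θ hθ T hT
end

section
/- Let G=(V,E) be a finite simple graph, ω: E → ℚ an edge-weight function, χ: V → {1,…,c} a c-coloring, and S ⊆ V. For v ∈ S and i ∈ {1,…,c} let θ_v^i := ω({{v,w} ∈ E : w ∈ N(v)\S, χ(w) ≠ i}), and define T[S,c] as the maximum, over all functions σ: S → {1,…,c}, of the total weight of those edges of E with at least one endpoint in S that are properly colored under the coloring equal to σ on S and equal to χ on V\S. Let ω_S := ω({{u,v} ∈ E : {u,v} ∩ S ≠ ∅ and χ(u) ≠ χ(v)}) be the weight of all properly colored edges under χ with at least one endpoint in S. Then the maximum of ω(E(χ'))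 over all c-colorings χ' of G with D_flip(χ,χ') ⊆ S equals ω(E(χ)) − ω_S + T[S,c]. -/
/-!
A recoloring `χ'` that agrees with `χ` off `S` keeps the colors of every edge avoiding `S`, so
`ω(E(χ'))` is a constant `B` (the weight of the properly colored edges avoiding `S` under `χ`) plus
the weight of the properly colored edges touching `S`. Such recolorings are exactly the overlays of
maps `σ` on `S` onto `χ`, so the achievable weights are the translate by `B` of the set whose maximum
is `T[S,c]`, and its maximum is `B + T[S,c] = ω(E(χ)) - ω_S + T[S,c]`.
-/

open Finset
open scoped Classical

section Recoloring

variable {V α M : Type*} [Fintype V] [DecidableEq V] [DecidableEq α] [AddCommMonoid M]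

theorem sum_filter_not_isDiag_map_eq_add {E : Finset (Sym2 V)} (ω : Sym2 V → M) {S : Finset V}
    {χ χ' : V → α} (h : ∀ v, v ∉ S → χ' v = χ v) :
    ∑ e ∈ E.filter (fun e => ¬ (Sym2.map χ' e).IsDiag), ω e
      = (∑ e ∈ E.filter (fun e => (∃ u ∈ e, u ∈ S) ∧ ¬ (Sym2.map χ' e).IsDiag), ω e)
        + ∑ e ∈ E.filter (fun e => ¬ (∃ u ∈ e, u ∈ S) ∧ ¬ (Sym2.map χ e).IsDiag), ω e := by
  rw [← sum_filter_add_sum_filter_not _ (fun e => ∃ u ∈ e, u ∈ S), filter_filter, filter_filter]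
  congr 1
  · exact sum_congr (filter_congr fun _ _ => and_comm) fun _ _ => rfl
  · refine sum_congr (filter_congr fun e _ => ?_) fun _ _ => rfl
    by_cases hS : ∃ u ∈ e, u ∈ S
    · simp [hS]
    · have : Sym2.map χ' e = Sym2.map χ e :=
        Sym2.map_congr fun u hu => h u fun huS => hS ⟨u, hu, huS⟩
      rw [this, and_comm]

theorem setOf_recoloring_weight_eq_image (E : Finset (Sym2 V)) (ω : Sym2 V → M) (S : Finset V)
    {P : α → Prop} {χ : V → α} (hχ : ∀ v, P (χ v)) :
    {x | ∃ χ' : V → α, (∀ v, P (χ' v)) ∧ (∀ v, v ∉ S → χ' v = χ v) ∧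
        x = ∑ e ∈ E.filter (fun e => ¬ (Sym2.map χ' e).IsDiag), ω e}
      = (∑ e ∈ E.filter (fun e => ¬ (∃ u ∈ e, u ∈ S) ∧ ¬ (Sym2.map χ e).IsDiag), ω e + ·) ''
        {x | ∃ σ : V → α, (∀ v ∈ S, P (σ v)) ∧
          x = ∑ e ∈ E.filter (fun e => (∃ u ∈ e, u ∈ S) ∧
            ¬ (Sym2.map (fun v => if v ∈ S then σ v else χ v) e).IsDiag), ω e} := by
  ext x
  constructor
  · rintro ⟨χ', hP, hχ', rfl⟩
    have hσ : (fun v => if v ∈ S then χ' v else χ v) = χ' := by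
      funext v
      split_ifs with hv
      · rfl
      · exact (hχ' v hv).symm
    refine ⟨_, ⟨χ', fun v _ => hP v, rfl⟩, ?_⟩
    rw [hσ, sum_filter_not_isDiag_map_eq_add ω hχ', add_comm]
  · rintro ⟨_, ⟨σ, hσ, rfl⟩, rfl⟩
    refine ⟨fun v => if v ∈ S then σ v else χ v, fun v => ?_, fun v hv => if_neg hv, ?_⟩
    · dsimp only
      split_ifs with hv
      exacts [hσ v hv, hχ v]
    · rw [sum_filter_not_isDiag_map_eq_add ω (fun v hv => if_neg hv), add_comm]

end Recoloring

/-- The maximum of `ω(E(χ'))` over all `c`-colorings `χ'` with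
`D_flip(χ,χ') ⊆ S` equals `ω(E(χ)) - ω_S + T[S,c]`, where `ω_S` is the weight
of all properly colored edges under `χ` with at least one endpoint in `S` and
`T[S,c]` is the maximum, over all recolorings `σ` of `S` with colors from
`[1,c]`, of the weight of the properly colored edges with at least one
endpoint in `S`. -/
theorem max_recoloring_eq
    {V : Type*} [Fintype V] [DecidableEq V]
    (G : SimpleGraph V) (ω : Sym2 V → ℚ)
    (c : ℕ) (χ : V → ℕ) (hχ : ∀ v, χ v ∈ Finset.Icc 1 c)
    (S : Finset V)
    (T : ℚ)
    (hT : IsGreatest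
      {x : ℚ | ∃ σ : V → ℕ, (∀ v ∈ S, σ v ∈ Finset.Icc 1 c) ∧
        x = ∑ e ∈ G.edgeFinset.filter (fun e =>
            (∃ u ∈ e, u ∈ S) ∧
            ¬ (Sym2.map (fun v => if v ∈ S then σ v else χ v) e).IsDiag), ω e}
      T) :
    IsGreatest
      {x : ℚ | ∃ χ' : V → ℕ, (∀ v, χ' v ∈ Finset.Icc 1 c) ∧
        (∀ v, v ∉ S → χ' v = χ v) ∧
        x = ∑ e ∈ G.edgeFinset.filter (fun e => ¬ (Sym2.map χ' e).IsDiag), ω e}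
      ((∑ e ∈ G.edgeFinset.filter (fun e => ¬ (Sym2.map χ e).IsDiag), ω e) -
        (∑ e ∈ G.edgeFinset.filter (fun e =>
            (∃ u ∈ e, u ∈ S) ∧ ¬ (Sym2.map χ e).IsDiag), ω e) + T) := by
  rw [setOf_recoloring_weight_eq_image G.edgeFinset ω S hχ,
    sum_filter_not_isDiag_map_eq_add ω (S := S) (χ' := χ) fun _ _ => rfl, add_sub_cancel_left]
  exact (add_right_strictMono.map_isGreatest).2 hT
end

section
/- Let G=(V,E) be a finite simple graph with E ≠ ∅, ω: E → ℚ an edge-weight function, χ: V → {1,2} a 2-coloring, k a positive integer, and S' ⊆ V with |S'| < k. For v ∈ V and i ∈ {1,2} let ω_v^i := ω({{v,w} ∈ E : w ∈ N(v), χ(w) ≠ i}); let ω_max := max_{e ∈ E} |ω(e)|; for v ∈ V let χ(v)‾ denote the unique color in {1,2}\{χ(v)}; let χ_{S'} be the 2-coloring with χ_{S'}(v) = χ(v)‾ for v ∈ S' and χ_{S'}(v) = χ(v) otherwise. For v ∈ V\S', let β_v := 2·Σ_{e ∈ E(v,S') ∩ E(χ)} ω(e) − 2·Σ_{e ∈ E(v,S')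 \ E(χ)} ω(e), where E(v,S') is the set of edges joining v to a vertex of S', and let α_v := ω_v^{χ(v)‾} − ω_v^{χ(v)} + β_v. Let Y ⊆ V\S' be any set of k − |S'| vertices such that α_w ≤ α_v for every w ∈ V\(S' ∪ Y) and every v ∈ Y. Then for every 2-coloring χ' of G with S' ⊊ D_flip(χ,χ') and d_flip(χ,χ') = k, it holds that ω(E(χ')) ≤ ω(E(χ_{S'})) + Σ_{v ∈ Y} α_v + 2·C(k−|S'|, 2)·ω_max, where C(·,2) denotes the binomial coefficient. -/
/-!
Write `T := D_flip(χ,χ') \ S'`, so that `χ'` is `χ_{S'}` with the vertices of `T` flipped as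
well. Flipping a vertex set in a `2`-coloring toggles exactly the edges with one endpoint in it,
so `ω(E(χ')) - ω(E(χ_{S'}))` is the sum over `v ∈ T` of the gains of flipping `v` alone in
`χ_{S'}` (these gains are the `α_v`), corrected by the edges inside `T`, each counted twice;
this correction is at most `|T| (|T| - 1) ω_max = 2 binom(k - |S'|, 2) ω_max`. Finally
`|T| = |Y|`, `T` avoids `S'`, and `Y` carries the largest `α`-values outside `S'`, so
`Σ_T α ≤ Σ_Y α`.
-/

open Finset
open scoped Classical

theorem Fin.two_add_one_eq_iff_ne {a b : Fin 2} : a + 1 = b ↔ a ≠ b := by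
  revert a b; decide

theorem Fin.two_eq_add_one_iff_ne {a b : Fin 2} : a = b + 1 ↔ a ≠ b := by
  revert a b; decide

theorem Finset.sum_le_sum_of_card_eq {ι M : Type*} [DecidableEq ι] [AddCommMonoid M]
    [LinearOrder M] [IsOrderedAddMonoid M] {s t : Finset ι} {f : ι → M}
    (hcard : s.card = t.card)
    (h : ∀ a ∈ s, a ∉ t → ∀ b ∈ t, b ∉ s → f a ≤ f b) :
    ∑ i ∈ s, f i ≤ ∑ i ∈ t, f i := by
  rw [← sum_inter_add_sum_sdiff s t, ← sum_inter_add_sum_sdiff t s, inter_comm]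
  refine add_le_add le_rfl ?_
  rcases (t \ s).eq_empty_or_nonempty with hts | hts
  · have hst : s \ t = ∅ := by
      rw [← card_eq_zero, card_sdiff_comm hcard, hts, card_empty]
    simp [hst, hts]
  obtain ⟨b, hb, hb_min⟩ := exists_min_image (t \ s) f hts
  rw [mem_sdiff] at hb
  calc ∑ i ∈ s \ t, f i ≤ (s \ t).card • f b := sum_le_card_nsmul _ _ _ fun a ha =>
        h a (mem_sdiff.1 ha).1 (mem_sdiff.1 ha).2 b hb.1 hb.2
    _ = (t \ s).card • f b := by rw [card_sdiff_comm hcard]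
    _ ≤ ∑ i ∈ t \ s, f i := card_nsmul_le_sum _ _ _ hb_min

namespace SimpleGraph

variable {V : Type*} [Fintype V] (G : SimpleGraph V) [DecidableRel G.Adj]

theorem sum_darts_eq_sum_sum_neighborFinset {M : Type*} [AddCommMonoid M] (F : V → V → M) :
    ∑ d : G.Dart, F d.fst d.snd = ∑ v, ∑ w ∈ G.neighborFinset v, F v w := by
  rw [sum_sigma']
  refine sum_bij' (fun d _ => ⟨d.fst, d.snd⟩) (fun x hx => ⟨(x.1, x.2), by simpa using hx⟩)
    ?_ ?_ ?_ ?_ ?_ <;> simp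

theorem sum_darts_edge {M : Type*} [AddCommMonoid M] (f : Sym2 V → M) :
    ∑ d : G.Dart, f d.edge = 2 • ∑ e ∈ G.edgeFinset, f e := by
  rw [← sum_fiberwise_of_maps_to (g := Dart.edge) (t := G.edgeFinset)
    (fun d _ => by simp), smul_sum]
  refine sum_congr rfl fun e he => ?_
  rw [sum_congr rfl fun d hd => by rw [(mem_filter.1 hd).2], sum_const,
    G.dart_edge_fiber_card e (by simpa using he)]

theorem two_nsmul_sum_edgeFinset {M : Type*} [AddCommMonoid M] (f : Sym2 V → M) :
    2 • ∑ e ∈ G.edgeFinset, f e = ∑ v, ∑ w ∈ G.neighborFinset v, f s(v, w) := by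
  rw [← G.sum_darts_edge, ← G.sum_darts_eq_sum_sum_neighborFinset]
  rfl

theorem sum_sum_neighborFinset_comm {M : Type*} [AddCommMonoid M] (F : V → V → M) :
    ∑ v, ∑ w ∈ G.neighborFinset v, F w v = ∑ v, ∑ w ∈ G.neighborFinset v, F v w := by
  simp only [neighborFinset_eq_filter, sum_filter]
  rw [sum_comm]
  simp only [G.adj_comm]

end SimpleGraph

theorem two_mul_sum_properEdges {V α : Type*} [Fintype V] [DecidableEq α] (G : SimpleGraph V)
    [DecidableRel G.Adj] (ω : Sym2 V → ℚ) (c : V → α) :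
    2 * ∑ e ∈ properEdges G c, ω e =
      ∑ v, ∑ w ∈ G.neighborFinset v, if c v ≠ c w then ω s(v, w) else 0 := by
  have h := G.two_nsmul_sum_edgeFinset fun e => if ¬ (Sym2.map c e).IsDiag then ω e else 0
  simp only [nsmul_eq_mul, Nat.cast_ofNat, Sym2.map_mk, Sym2.mk_isDiag_iff] at h
  rw [properEdges, sum_filter]
  convert h

/-- The change of `ω(E(c))` caused by the edge `s(v, w)` when exactly one of its ends is
recoloured. -/
def edgeFlipGain {V : Type*} (ω : Sym2 V → ℚ) (c : V → Fin 2) (v w : V) : ℚ :=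
  if c w = c v then ω s(v, w) else -ω s(v, w)

theorem abs_edgeFlipGain {V : Type*} (ω : Sym2 V → ℚ) (c : V → Fin 2) (v w : V) :
    |edgeFlipGain ω c v w| = |ω s(v, w)| := by
  unfold edgeFlipGain; split_ifs <;> simp

section Flip

variable {V : Type*} [DecidableEq V]

def flipOn (c : V → Fin 2) (T : Finset V) : V → Fin 2 :=
  fun v => if v ∈ T then c v + 1 else c v

theorem flipOn_flipOn {c : V → Fin 2} {S T : Finset V} (h : Disjoint S T) :
    flipOn (flipOn c S) T = flipOn c (S ∪ T) := by
  funext v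
  by_cases hS : v ∈ S
  · simp [flipOn, hS, disjoint_left.1 h hS]
  · by_cases hT : v ∈ T <;> simp [flipOn, hS, hT]

theorem flipOn_flipSet [Fintype V] (c c' : V → Fin 2) : flipOn c (flipSet c c') = c' := by
  funext v
  by_cases h : c v = c' v
  · simp [flipOn, flipSet, h]
  · simp [flipOn, flipSet, h, Fin.two_add_one_eq_iff_ne.2 h]

theorem ite_flipOn_ne_flipOn (ω : Sym2 V → ℚ) (c : V → Fin 2) (T : Finset V) (v w : V) :
    (if flipOn c T v ≠ flipOn c T w then ω s(v, w) else 0) =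
      (if c v ≠ c w then ω s(v, w) else 0) +
      (if v ∈ T ∧ w ∉ T then edgeFlipGain ω c v w else 0) +
      (if w ∈ T ∧ v ∉ T then edgeFlipGain ω c w v else 0) := by
  rw [edgeFlipGain, edgeFlipGain, Sym2.eq_swap (a := w)]
  by_cases hv : v ∈ T <;> by_cases hw : w ∈ T <;> by_cases hc : c v = c w <;>
    simp [flipOn, hv, hw, hc, eq_comm (a := c w), Fin.two_add_one_eq_iff_ne,
      Fin.two_eq_add_one_iff_ne]

variable [Fintype V] (G : SimpleGraph V) [DecidableRel G.Adj] (ω : Sym2 V → ℚ)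

def vertexFlipGain (c : V → Fin 2) (v : V) : ℚ :=
  ∑ w ∈ G.neighborFinset v, edgeFlipGain ω c v w

theorem SimpleGraph.sum_sum_neighborFinset_ite_mem_and_notMem (T : Finset V)
    (F : V → V → ℚ) :
    ∑ v, ∑ w ∈ G.neighborFinset v, (if v ∈ T ∧ w ∉ T then F v w else 0) =
      ∑ v ∈ T, ∑ w ∈ G.neighborFinset v with w ∉ T, F v w := by
  rw [← Fintype.sum_ite_mem T]
  refine sum_congr rfl fun v _ => ?_
  by_cases hv : v ∈ T <;> simp [hv, sum_filter]

theorem sum_properEdges_flipOn (c : V → Fin 2) (T : Finset V) :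
    ∑ e ∈ properEdges G (flipOn c T), ω e =
      ∑ e ∈ properEdges G c, ω e +
        ∑ v ∈ T, ∑ w ∈ G.neighborFinset v with w ∉ T, edgeFlipGain ω c v w := by
  refine mul_left_cancel₀ (two_ne_zero (α := ℚ)) ?_
  rw [two_mul_sum_properEdges]
  simp only [ite_flipOn_ne_flipOn, sum_add_distrib]
  rw [G.sum_sum_neighborFinset_comm
      fun v w => if v ∈ T ∧ w ∉ T then edgeFlipGain ω c v w else 0,
    G.sum_sum_neighborFinset_ite_mem_and_notMem, ← two_mul_sum_properEdges]
  ring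

theorem neg_sum_edgeFlipGain_mem_le (c : V → Fin 2) (T : Finset V) {M : ℚ} (hM0 : 0 ≤ M)
    (hM : ∀ e ∈ G.edgeFinset, |ω e| ≤ M) {v : V} (hv : v ∈ T) :
    -∑ w ∈ G.neighborFinset v with w ∈ T, edgeFlipGain ω c v w ≤ (T.card - 1) * M := by
  have hsub : (G.neighborFinset v).filter (· ∈ T) ⊆ T.erase v := fun w hw => by
    simp only [mem_filter, SimpleGraph.mem_neighborFinset] at hw
    exact mem_erase.2 ⟨hw.1.ne', hw.2⟩
  have hcard : ((T.erase v).card : ℚ) = T.card - 1 := by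
    rw [← card_erase_add_one hv]; push_cast; ring
  calc -∑ w ∈ G.neighborFinset v with w ∈ T, edgeFlipGain ω c v w
      = ∑ w ∈ G.neighborFinset v with w ∈ T, -edgeFlipGain ω c v w := by
        rw [sum_neg_distrib]
    _ ≤ ∑ w ∈ G.neighborFinset v with w ∈ T, M := by
        refine sum_le_sum fun w hw => ?_
        have hadj : G.Adj v w := by simpa using (mem_filter.1 hw).1
        calc -edgeFlipGain ω c v w ≤ |edgeFlipGain ω c v w| := neg_le_abs _
          _ = |ω s(v, w)| := abs_edgeFlipGain ω c v w
          _ ≤ M := hM _ (by simpa using hadj)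
    _ ≤ ∑ w ∈ T.erase v, M := sum_le_sum_of_subset_of_nonneg hsub fun _ _ _ => hM0
    _ = (T.card - 1) * M := by rw [sum_const, nsmul_eq_mul, hcard]

theorem sum_properEdges_flipOn_le (c : V → Fin 2) (T : Finset V) {M : ℚ} (hM0 : 0 ≤ M)
    (hM : ∀ e ∈ G.edgeFinset, |ω e| ≤ M) :
    ∑ e ∈ properEdges G (flipOn c T), ω e ≤
      ∑ e ∈ properEdges G c, ω e + ∑ v ∈ T, vertexFlipGain G ω c v +
        2 * (T.card.choose 2 : ℚ) * M := by
  have hsplit : ∀ v, ∑ w ∈ G.neighborFinset v with w ∉ T, edgeFlipGain ω c v w =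
      vertexFlipGain G ω c v -
        ∑ w ∈ G.neighborFinset v with w ∈ T, edgeFlipGain ω c v w := by
    intro v
    rw [vertexFlipGain, ← sum_filter_add_sum_filter_not (G.neighborFinset v) (· ∈ T)]
    ring
  have hrest : ∑ v ∈ T, -∑ w ∈ G.neighborFinset v with w ∈ T, edgeFlipGain ω c v w ≤
      2 * (T.card.choose 2 : ℚ) * M := by
    calc _ ≤ ∑ v ∈ T, (T.card - 1 : ℚ) * M :=
          sum_le_sum fun v hv => neg_sum_edgeFlipGain_mem_le G ω c T hM0 hM hv
      _ = 2 * (T.card.choose 2 : ℚ) * M := by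
          rw [sum_const, nsmul_eq_mul, Nat.cast_choose_two]; ring
  rw [sum_properEdges_flipOn, sum_congr rfl fun v _ => hsplit v, sum_sub_distrib]
  rw [sum_neg_distrib] at hrest
  linarith

theorem vertexFlipGain_flipOn_of_notMem (c : V → Fin 2) {S : Finset V} {v : V} (hv : v ∉ S) :
    vertexFlipGain G ω (flipOn c S) v =
      ∑ w ∈ (G.neighborFinset v).filter (fun w => c w ≠ c v + 1), ω s(v, w) -
        ∑ w ∈ (G.neighborFinset v).filter (fun w => c w ≠ c v), ω s(v, w) +
      (2 * ∑ w ∈ (G.neighborFinset v ∩ S).filter (fun w => c w ≠ c v), ω s(v, w) -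
        2 * ∑ w ∈ (G.neighborFinset v ∩ S).filter (fun w => c w = c v), ω s(v, w)) := by
  simp only [vertexFlipGain, sum_filter, ← sum_ite_mem, mul_sum,
    ← sum_sub_distrib, ← sum_add_distrib]
  refine sum_congr rfl fun w _ => ?_
  by_cases hw : w ∈ S <;> by_cases hc : c w = c v <;>
    simp [edgeFlipGain, flipOn, hv, hw, hc, Fin.two_add_one_eq_iff_ne,
      Fin.two_eq_add_one_iff_ne] <;> ring

end Flip

theorem upper_bound_two_colors_general
    {V : Type*} [Fintype V] [DecidableEq V]
    (G : SimpleGraph V) [DecidableRel G.Adj]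
    (hE : G.edgeFinset.Nonempty)
    (ω : Sym2 V → ℚ) (χ : V → Fin 2) (k : ℕ)
    (S' : Finset V)
    -- `ω_v^i`: total weight of edges at `v` that are properly colored when `v` gets color `i`
    (ωv : V → Fin 2 → ℚ)
    (hωv : ∀ v i, ωv v i = ∑ w ∈ (G.neighborFinset v).filter (fun w => χ w ≠ i), ω s(v, w))
    -- `β_v` for `v ∉ S'`
    (β : V → ℚ)
    (hβ : ∀ v, β v =
      2 * (∑ w ∈ (G.neighborFinset v ∩ S').filter (fun w => χ w ≠ χ v), ω s(v, w)) -
      2 * (∑ w ∈ (G.neighborFinset v ∩ S').filter (fun w => χ w = χ v), ω s(v, w)))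
    -- `α_v = ω_v^{other color} - ω_v^{χ v} + β_v`
    (α : V → ℚ)
    (hα : ∀ v, α v = ωv v (χ v + 1) - ωv v (χ v) + β v)
    -- `Y ⊆ V \ S'` consists of `k - |S'|` vertices with largest `α`-values
    (Y : Finset V) (hYcard : Y.card = k - S'.card)
    (hYmax : ∀ w, w ∉ S' → w ∉ Y → ∀ v ∈ Y, α w ≤ α v) :
    ∀ χ' : V → Fin 2, S' ⊂ flipSet χ χ' → (flipSet χ χ').card = k →
      (∑ e ∈ properEdges G χ', ω e) ≤
        (∑ e ∈ properEdges G (fun v => if v ∈ S' then χ v + 1 else χ v), ω e) +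
        (∑ v ∈ Y, α v) +
        2 * (Nat.choose (k - S'.card) 2 : ℚ) *
          (G.edgeFinset.sup' hE fun e => |ω e|) := by
  intro χ' hS'D hcard
  set T := flipSet χ χ' \ S'
  have hχ' : χ' = flipOn (flipOn χ S') T := by
    rw [flipOn_flipOn disjoint_sdiff, union_sdiff_of_subset hS'D.subset,
      flipOn_flipSet]
  have hTcard : T.card = k - S'.card := by
    rw [card_sdiff_of_subset hS'D.subset, hcard]
  have hαT : ∑ v ∈ T, vertexFlipGain G ω (flipOn χ S') v = ∑ v ∈ T, α v :=
    sum_congr rfl fun v hv => by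
      rw [vertexFlipGain_flipOn_of_notMem G ω χ (mem_sdiff.1 hv).2, hα, hωv, hωv, hβ]
  have hTY : ∑ v ∈ T, α v ≤ ∑ v ∈ Y, α v :=
    sum_le_sum_of_card_eq (hTcard.trans hYcard.symm) fun w hwT hwY v hvY _ =>
      hYmax w (mem_sdiff.1 hwT).2 hwY v hvY
  obtain ⟨e₀, he₀⟩ := hE
  have hbound := sum_properEdges_flipOn_le G ω (flipOn χ S') T
    ((abs_nonneg _).trans (le_sup' (fun e => |ω e|) he₀))
    fun e he => le_sup' (fun e => |ω e|) he
  rw [hαT] at hbound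
  rw [hχ', ← hTcard]
  exact hbound.trans (add_le_add (add_le_add le_rfl hTY) le_rfl)

/-- Correctness of the upper bound `b_{c=2}`: for a `2`-coloring `χ`, a set
`S'` with `|S'| < k`, and any `2`-coloring `χ'` with `S' ⊊ D_flip(χ,χ')` and
`d_flip(χ,χ') = k`, the weight `ω(E(χ'))` is at most
`ω(E(χ_{S'})) + Σ_{v ∈ Y} α_v + 2·binom(k-|S'|,2)·ω_max`. -/
theorem upper_bound_two_colors
    {V : Type*} [Fintype V] [DecidableEq V]
    (G : SimpleGraph V) [DecidableRel G.Adj]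
    (hE : G.edgeFinset.Nonempty)
    (ω : Sym2 V → ℚ) (χ : V → Fin 2) (k : ℕ) (hk : 1 ≤ k)
    (S' : Finset V) (hS' : S'.card < k)
    -- `ω_v^i`: total weight of edges at `v` that are properly colored when `v` gets color `i`
    (ωv : V → Fin 2 → ℚ)
    (hωv : ∀ v i, ωv v i = ∑ w ∈ (G.neighborFinset v).filter (fun w => χ w ≠ i), ω s(v, w))
    -- `β_v` for `v ∉ S'`
    (β : V → ℚ)
    (hβ : ∀ v, β v =
      2 * (∑ w ∈ (G.neighborFinset v ∩ S').filter (fun w => χ w ≠ χ v), ω s(v, w)) -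
      2 * (∑ w ∈ (G.neighborFinset v ∩ S').filter (fun w => χ w = χ v), ω s(v, w)))
    -- `α_v = ω_v^{other color} - ω_v^{χ v} + β_v`
    (α : V → ℚ)
    (hα : ∀ v, α v = ωv v (χ v + 1) - ωv v (χ v) + β v)
    -- `Y ⊆ V \ S'` consists of `k - |S'|` vertices with largest `α`-values
    (Y : Finset V) (hYS' : Disjoint Y S') (hYcard : Y.card = k - S'.card)
    (hYmax : ∀ w, w ∉ S' → w ∉ Y → ∀ v ∈ Y, α w ≤ α v) :
    ∀ χ' : V → Fin 2, S' ⊂ flipSet χ χ' → (flipSet χ χ').card = k →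
      (∑ e ∈ properEdges G χ', ω e) ≤
        (∑ e ∈ properEdges G (fun v => if v ∈ S' then χ v + 1 else χ v), ω e) +
        (∑ v ∈ Y, α v) +
        2 * (Nat.choose (k - S'.card) 2 : ℚ) *
          (G.edgeFinset.sup' hE fun e => |ω e|) :=
  upper_bound_two_colors_general G hE ω χ k S' ωv hωv β hβ α hα Y hYcard hYmax
end

section
/- Let c ≥ 3, let G=(V,E) be a finite simple graph with E ≠ ∅, ω: E → ℚ an edge-weight function, χ: V → {1,…,c} a c-coloring, k a positive integer, and S' ⊆ V with |S'| < k. For v ∈ V and i ∈ {1,…,c} let ω_v^i := ω({{v,w} ∈ E : w ∈ N(v), χ(w) ≠ i}); for v ∈ S' and i ∈ {1,…,c} let θ_v^i := ω({{v,w} ∈ E : w ∈ N(v)\S', χ(w) ≠ i}); let ω_max := max_{e ∈ E} |ω(e)|. Define b(S') := ω(E(χ)) + C(|S'|,2)·ω_max − Σ_{e ∈ E(S') ∩ E(χ)} ω(e) + Σ_{v ∈ S'} ( max_{i ≠ χ(v)} θ_v^i − θ_v^{χ(v)} ), where E(S') is the set of edges with both endpoints in S'. For v ∈ V\S' let β_v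 := Σ_{e ∈ E(v,S')} 2·|ω(e)|, where E(v,S') is the set of edges joining v to a vertex of S', and let α_v := max_{i ≠ χ(v)} (ω_v^i − ω_v^{χ(v)}) + β_v. Let Y ⊆ V\S' be any set of k − |S'| vertices such that α_w ≤ α_v for every w ∈ V\(S' ∪ Y) and every v ∈ Y. Then for every c-coloring χ' of G with S' ⊊ D_flip(χ,χ') and d_flip(χ,χ') = k, it holds that ω(E(χ')) ≤ b(S') + Σ_{v ∈ Y} α_v + 2·C(k−|S'|, 2)·ω_max, where C(·,2) denotes the binomial coefficient. -/
open Finset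
open scoped Classical

lemma two_choose_q (n : ℕ) : (2:ℚ) * (n.choose 2 : ℚ) = (n:ℚ) * ((n:ℚ) - 1) := by
  induction n with
  | zero => simp
  | succ m ih =>
    rw [Nat.choose_succ_succ, Nat.choose_one_right]
    push_cast; push_cast at ih; ring_nf; ring_nf at ih; linarith

lemma ite_le_ite_add_abs (a b : Prop) [Decidable a] [Decidable b] (x : ℚ) :
    (if a then x else 0) ≤ (if b then x else 0) + |x| := by
  have h1 := le_abs_self x; have h2 := neg_abs_le x; have h3 := abs_nonneg x
  split_ifs <;> linarith

lemma ite_sub_ite_le_abs (a b : Prop) [Decidable a] [Decidable b] (x : ℚ) :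
    (if a then x else 0) - (if b then x else 0) ≤ |x| := by
  have h1 := le_abs_self x; have h2 := neg_abs_le x; have h3 := abs_nonneg x
  split_ifs <;> linarith

lemma ite_comb_le_abs (a b c : Prop) [Decidable a] [Decidable b] [Decidable c] (x : ℚ) :
    (if a then x else 0) + (if b then x else 0) - 2 * (if c then x else 0) ≤ 2 * |x| := by
  have h1 := le_abs_self x; have h2 := neg_abs_le x; have h3 := abs_nonneg x
  split_ifs <;> linarith

lemma ite_le_abs (a : Prop) [Decidable a] (x : ℚ) : (if a then x else 0) ≤ |x| := by
  have h1 := le_abs_self x; have h3 := abs_nonneg x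
  split_ifs <;> linarith

lemma ball_sym2 {V : Type*} (S : Finset V) (v w : V) :
    (∀ x ∈ s(v,w), x ∈ S) ↔ v ∈ S ∧ w ∈ S := by
  constructor
  · intro H; exact ⟨H v (Sym2.mem_mk_left v w), H w (Sym2.mem_mk_right v w)⟩
  · rintro ⟨h1, h2⟩ x hx
    rcases Sym2.mem_iff.1 hx with rfl | rfl
    · exact h1
    · exact h2

lemma symswap {V : Type*} [Fintype V] [DecidableEq V] (G : SimpleGraph V) [DecidableRel G.Adj]
    (F : V → V → ℚ) (hF : ∀ v w, F v w = F w v) (A B : Finset V) :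
    ∑ v ∈ A, ∑ w ∈ G.neighborFinset v ∩ B, F v w
      = ∑ v ∈ B, ∑ w ∈ G.neighborFinset v ∩ A, F v w := by
  rw [Finset.sum_comm' (t' := B) (s' := fun w => G.neighborFinset w ∩ A) ?h]
  · exact Finset.sum_congr rfl fun w _ => Finset.sum_congr rfl fun v _ => hF v w
  case h =>
    intro x y
    simp only [Finset.mem_inter, SimpleGraph.mem_neighborFinset]
    constructor
    · rintro ⟨h1, h2, h3⟩; exact ⟨⟨h2.symm, h1⟩, h3⟩
    · rintro ⟨⟨h2, h3⟩, h1⟩; exact ⟨h3, h2.symm, h1⟩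

lemma inner_split {V : Type*} [Fintype V] [DecidableEq V] (G : SimpleGraph V) [DecidableRel G.Adj]
    (A B C : Finset V) (hAB : Disjoint A B) (hAC : Disjoint A C) (hBC : Disjoint B C)
    (hU : A ∪ B ∪ C = univ) (F : V → ℚ) (v : V) :
    ∑ w ∈ G.neighborFinset v, F w
      = (∑ w ∈ G.neighborFinset v ∩ A, F w) + (∑ w ∈ G.neighborFinset v ∩ B, F w)
        + (∑ w ∈ G.neighborFinset v ∩ C, F w) := by
  have hN : G.neighborFinset v
      = (G.neighborFinset v ∩ A ∪ G.neighborFinset v ∩ B) ∪ G.neighborFinset v ∩ C := by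
    rw [← Finset.inter_union_distrib_left, ← Finset.inter_union_distrib_left, hU,
      Finset.inter_univ]
  have d1 : Disjoint (G.neighborFinset v ∩ A) (G.neighborFinset v ∩ B) :=
    hAB.mono Finset.inter_subset_right Finset.inter_subset_right
  have d2 : Disjoint (G.neighborFinset v ∩ A ∪ G.neighborFinset v ∩ B)
      (G.neighborFinset v ∩ C) :=
    Finset.disjoint_union_left.2
      ⟨hAC.mono Finset.inter_subset_right Finset.inter_subset_right,
       hBC.mono Finset.inter_subset_right Finset.inter_subset_right⟩
  calc ∑ w ∈ G.neighborFinset v, F w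
      = ∑ w ∈ (G.neighborFinset v ∩ A ∪ G.neighborFinset v ∩ B) ∪ G.neighborFinset v ∩ C, F w := by
        rw [← hN]
    _ = _ := by rw [Finset.sum_union d2, Finset.sum_union d1]

lemma outer_split {V : Type*} [Fintype V] [DecidableEq V]
    (A B C : Finset V) (hAB : Disjoint A B) (hAC : Disjoint A C) (hBC : Disjoint B C)
    (hU : A ∪ B ∪ C = univ) (F : V → ℚ) :
    ∑ v, F v = (∑ v ∈ A, F v) + (∑ v ∈ B, F v) + (∑ v ∈ C, F v) := by
  calc ∑ v, F v = ∑ v ∈ A ∪ B ∪ C, F v := by rw [hU]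
    _ = _ := by
        rw [Finset.sum_union (Finset.disjoint_union_left.2 ⟨hAC, hBC⟩), Finset.sum_union hAB]

lemma decomp {V : Type*} [Fintype V] [DecidableEq V] (G : SimpleGraph V) [DecidableRel G.Adj]
    (A B C : Finset V) (hAB : Disjoint A B) (hAC : Disjoint A C) (hBC : Disjoint B C)
    (hU : A ∪ B ∪ C = univ) (F : V → V → ℚ) (hF : ∀ v w, F v w = F w v) :
    ∑ v, ∑ w ∈ G.neighborFinset v, F v w
      = (∑ v ∈ A, ∑ w ∈ G.neighborFinset v ∩ A, F v w)
      + 2 * (∑ v ∈ A, ∑ w ∈ G.neighborFinset v ∩ B, F v w)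
      + 2 * (∑ v ∈ A, ∑ w ∈ G.neighborFinset v ∩ C, F v w)
      + (∑ v ∈ B, ∑ w ∈ G.neighborFinset v ∩ B, F v w)
      + 2 * (∑ v ∈ B, ∑ w ∈ G.neighborFinset v ∩ C, F v w)
      + (∑ v ∈ C, ∑ w ∈ G.neighborFinset v ∩ C, F v w) := by
  rw [outer_split A B C hAB hAC hBC hU]
  have e1 : ∀ D : Finset V, ∑ v ∈ D, ∑ w ∈ G.neighborFinset v, F v w
      = (∑ v ∈ D, ∑ w ∈ G.neighborFinset v ∩ A, F v w)
        + (∑ v ∈ D, ∑ w ∈ G.neighborFinset v ∩ B, F v w)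
        + (∑ v ∈ D, ∑ w ∈ G.neighborFinset v ∩ C, F v w) := by
    intro D
    rw [← Finset.sum_add_distrib, ← Finset.sum_add_distrib]
    exact Finset.sum_congr rfl fun v _ =>
      inner_split G A B C hAB hAC hBC hU (F v) v
  rw [e1 A, e1 B, e1 C, symswap G F hF B A, symswap G F hF C A, symswap G F hF C B]
  ring

lemma sum_pairs {V : Type*} [Fintype V] [DecidableEq V] (G : SimpleGraph V) [DecidableRel G.Adj]
    (f : Sym2 V → ℚ) :
    ∀ s : Finset (Sym2 V), s ⊆ G.edgeFinset →
    ∑ v, ∑ w ∈ (G.neighborFinset v).filter (fun w => s(v,w) ∈ s), f s(v,w) = 2 * ∑ e ∈ s, f e := by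
  intro s
  induction s using Finset.induction_on with
  | empty => simp
  | @insert e s he ih =>
    intro hsub
    induction e using Sym2.ind with
    | _ a b =>
    have hab : G.Adj a b := by
      have := hsub (Finset.mem_insert_self _ _)
      rwa [SimpleGraph.mem_edgeFinset, SimpleGraph.mem_edgeSet] at this
    have hne : a ≠ b := hab.ne
    have hsub' : s ⊆ G.edgeFinset := fun x hx => hsub (Finset.mem_insert_of_mem hx)
    have split : ∀ v, ∑ w ∈ (G.neighborFinset v).filter (fun w => s(v,w) ∈ insert s(a,b) s), f s(v,w)
        = (∑ w ∈ (G.neighborFinset v).filter (fun w => s(v,w) ∈ s), f s(v,w))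
          + ∑ w ∈ G.neighborFinset v, (if s(v,w) = s(a,b) then f s(a,b) else 0) := by
      intro v
      rw [Finset.sum_filter, Finset.sum_filter, ← Finset.sum_add_distrib]
      refine Finset.sum_congr rfl fun w _ => ?_
      by_cases h1 : s(v,w) = s(a,b)
      · have h2 : s(v,w) ∉ s := h1 ▸ he
        simp [h1, h2, he]
      · by_cases h2 : s(v,w) ∈ s <;> simp [h1, h2]
    have inner : ∀ v : V, (∑ w ∈ G.neighborFinset v, (if s(v,w) = s(a,b) then f s(a,b) else 0))
        = (if v = a then f s(a,b) else 0) + (if v = b then f s(a,b) else 0) := by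
      intro v
      simp only [Sym2.eq_iff]
      by_cases hva : v = a
      · have hvb : v ≠ b := by rw [hva]; exact hne
        have hcond : ∀ w, (v = a ∧ w = b ∨ v = b ∧ w = a) = (w = b) := fun w => by
          simp [hva, hvb, hne, hne.symm]
        simp only [hcond, if_pos hva, if_neg hvb, add_zero]
        rw [Finset.sum_ite_eq' (G.neighborFinset v) b (fun _ => f s(a,b)), hva]
        simp [hab]
      · by_cases hvb : v = b
        · have hcond : ∀ w, (v = a ∧ w = b ∨ v = b ∧ w = a) = (w = a) := fun w => by
            simp [hva, hvb, hne, hne.symm]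
          simp only [hcond, if_neg hva, if_pos hvb, zero_add]
          rw [Finset.sum_ite_eq' (G.neighborFinset v) a (fun _ => f s(a,b)), hvb]
          simp [hab.symm]
        · have hcond : ∀ w, (v = a ∧ w = b ∨ v = b ∧ w = a) = False := fun w => by
            simp [hva, hvb, hne, hne.symm]
          simp [hcond, hva, hvb]
    have last : (∑ v : V, ∑ w ∈ G.neighborFinset v, (if s(v,w) = s(a,b) then f s(a,b) else 0))
        = 2 * f s(a,b) := by
      rw [Finset.sum_congr rfl fun v _ => inner v, Finset.sum_add_distrib,
        Finset.sum_ite_eq' univ a (fun _ => f s(a,b)), Finset.sum_ite_eq' univ b (fun _ => f s(a,b))]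
      simp; ring
    rw [Finset.sum_congr rfl fun v _ => split v, Finset.sum_add_distrib, ih hsub',
      Finset.sum_insert he, mul_add, last]
    ring

/-- Correctness of the upper bound `b_{c≥3}`: for `c ≥ 3`, a `c`-coloring `χ`
(colors in `{1,…,c}`), a set `S'` with `|S'| < k`, and any `c`-coloring `χ'`
with `S' ⊊ D_flip(χ,χ')` and `d_flip(χ,χ') = k`, the weight `ω(E(χ'))` is at
most `b(S') + Σ_{v ∈ Y} α_v + 2·binom(k-|S'|,2)·ω_max`. -/
theorem upper_bound_many_colors
    {V : Type*} [Fintype V] [DecidableEq V]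
    (G : SimpleGraph V) [DecidableRel G.Adj]
    (hE : G.edgeFinset.Nonempty)
    (ω : Sym2 V → ℚ) (c : ℕ) (hc : 3 ≤ c)
    (χ : V → ℕ) (hχ : ∀ v, χ v ∈ Finset.Icc 1 c)
    (k : ℕ) (hk : 1 ≤ k)
    (S' : Finset V) (hS' : S'.card < k)
    -- `ω_v^i`: total weight of edges at `v` that are properly colored when `v` gets color `i`
    (ωv : V → ℕ → ℚ)
    (hωv : ∀ v i, ωv v i =
      ∑ w ∈ (G.neighborFinset v).filter (fun w => χ w ≠ i), ω s(v, w))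
    -- `θ_v^i`: as `ω_v^i` but only edges to neighbors outside `S'`
    (θ : V → ℕ → ℚ)
    (hθ : ∀ v i, θ v i =
      ∑ w ∈ (G.neighborFinset v).filter (fun w => w ∉ S' ∧ χ w ≠ i), ω s(v, w))
    -- `mθ v = max_{i ∈ {1,…,c}, i ≠ χ v} θ_v^i`
    (mθ : V → ℚ)
    (hmθ : ∀ v, IsGreatest {x : ℚ | ∃ i ∈ Finset.Icc 1 c, i ≠ χ v ∧ x = θ v i} (mθ v))
    -- `mω v = max_{i ∈ {1,…,c}, i ≠ χ v} (ω_v^i - ω_v^{χ v})`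
    (mω : V → ℚ)
    (hmω : ∀ v, IsGreatest
      {x : ℚ | ∃ i ∈ Finset.Icc 1 c, i ≠ χ v ∧ x = ωv v i - ωv v (χ v)} (mω v))
    -- `β_v = Σ_{e ∈ E(v,S')} 2·|ω(e)|` and `α_v = mω v + β_v`
    (α : V → ℚ)
    (hα : ∀ v, α v = mω v + ∑ w ∈ G.neighborFinset v ∩ S', 2 * |ω s(v, w)|)
    -- `Y ⊆ V \ S'` consists of `k - |S'|` vertices with largest `α`-values
    (Y : Finset V) (hYS' : Disjoint Y S') (hYcard : Y.card = k - S'.card)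
    (hYmax : ∀ w, w ∉ S' → w ∉ Y → ∀ v ∈ Y, α w ≤ α v) :
    ∀ χ' : V → ℕ, (∀ v, χ' v ∈ Finset.Icc 1 c) →
      S' ⊂ flipSet χ χ' → (flipSet χ χ').card = k →
      (∑ e ∈ properEdges G χ', ω e) ≤
        -- b(S')
        ((∑ e ∈ properEdges G χ, ω e) +
          (Nat.choose S'.card 2 : ℚ) * (G.edgeFinset.sup' hE fun e => |ω e|) -
          (∑ e ∈ (properEdges G χ).filter (fun e => ∀ x ∈ e, x ∈ S'), ω e) +
          (∑ v ∈ S', (mθ v - θ v (χ v)))) +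
        (∑ v ∈ Y, α v) +
        2 * (Nat.choose (k - S'.card) 2 : ℚ) *
          (G.edgeFinset.sup' hE fun e => |ω e|) := by
  intro χ' hχ' hsub hcard
  classical
  set W := G.edgeFinset.sup' hE fun e => |ω e| with hWdef
  set D := flipSet χ χ' with hDdef
  set T := D \ S' with hTdef
  set R := (univ : Finset V) \ D with hRdef
  have hSD : S' ⊆ D := hsub.subset
  have hmemD : ∀ v, v ∈ D ↔ χ v ≠ χ' v := by
    intro v; simp [hDdef, flipSet]
  have hTcard : T.card = k - S'.card := by
    rw [hTdef, Finset.card_sdiff_of_subset hSD, hcard]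
  have dST : Disjoint S' T := by
    rw [hTdef]; exact Finset.disjoint_sdiff
  have dSR : Disjoint S' R := by
    rw [hRdef]
    exact Finset.disjoint_left.2 fun a ha hr => (Finset.mem_sdiff.1 hr).2 (hSD ha)
  have dTR : Disjoint T R := by
    rw [hTdef, hRdef]
    exact Finset.disjoint_left.2 fun a ha hr =>
      (Finset.mem_sdiff.1 hr).2 (Finset.mem_sdiff.1 ha).1
  have hU : S' ∪ T ∪ R = univ := by
    ext x
    simp only [hTdef, hRdef, Finset.mem_union, Finset.mem_sdiff, Finset.mem_univ, iff_true]
    by_cases hx : x ∈ D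
    · by_cases hxS : x ∈ S'
      · exact Or.inl (Or.inl hxS)
      · exact Or.inl (Or.inr ⟨hx, hxS⟩)
    · exact Or.inr ⟨trivial, hx⟩
  have hflip : ∀ v ∈ D, χ v ≠ χ' v := fun v hv => (hmemD v).1 hv
  have hfix : ∀ v, v ∉ D → χ v = χ' v := fun v hv => by
    by_contra hcon; exact hv ((hmemD v).2 hcon)
  have hWb : ∀ v w, G.Adj v w → |ω s(v,w)| ≤ W := fun v w ha =>
    Finset.le_sup' (fun e => |ω e|) (by rwa [SimpleGraph.mem_edgeFinset, SimpleGraph.mem_edgeSet])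
  have hW0 : 0 ≤ W := by
    obtain ⟨e0, he0⟩ := hE
    exact le_trans (abs_nonneg (ω e0)) (Finset.le_sup' (fun e => |ω e|) he0)
  -- the three pair-weight functions
  set gf : V → V → ℚ := fun v w => if χ' w ≠ χ' v then ω s(v,w) else 0 with hgf
  set hf : V → V → ℚ := fun v w => if χ w ≠ χ v then ω s(v,w) else 0 with hhf
  set mf : V → V → ℚ := fun v w => if χ w ≠ χ' v then ω s(v,w) else 0 with hmf
  have gsymm : ∀ v w, gf v w = gf w v := by
    intro v w
    simp only [hgf]
    by_cases hc1 : χ' w = χ' v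
    · simp [hc1]
    · rw [if_pos hc1, if_pos (Ne.symm hc1)]
      exact congrArg ω Sym2.eq_swap
  have hsymm : ∀ v w, hf v w = hf w v := by
    intro v w
    simp only [hhf]
    by_cases hc1 : χ w = χ v
    · simp [hc1]
    · rw [if_pos hc1, if_pos (Ne.symm hc1)]
      exact congrArg ω Sym2.eq_swap
  have asymm : ∀ v w, |ω s(v,w)| = |ω s(w,v)| := fun v w => by
    rw [Sym2.eq_swap]
  -- membership in properEdges
  have memPE : ∀ (κ : V → ℕ) (v w : V), G.Adj v w →
      (s(v,w) ∈ properEdges G κ ↔ ¬ κ w = κ v) := by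
    intro κ v w ha
    simp [properEdges, SimpleGraph.mem_edgeFinset, ha, Sym2.map_pair_eq,
      Sym2.mk_isDiag_iff, eq_comm]
  have hPEsub : ∀ (κ : V → ℕ), properEdges G κ ⊆ G.edgeFinset := by
    intro κ e he
    simp only [properEdges, Finset.mem_filter, SimpleGraph.mem_edgeFinset] at he
    rw [SimpleGraph.mem_edgeFinset]
    exact he.1
  have hPEsub2 : (properEdges G χ).filter (fun e => ∀ x ∈ e, x ∈ S') ⊆ G.edgeFinset := by
    intro e he
    exact hPEsub χ (Finset.mem_filter.1 he).1
  -- edge sums as ordered pair sums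
  have E1 : ∑ v, ∑ w ∈ G.neighborFinset v, gf v w = 2 * ∑ e ∈ properEdges G χ', ω e := by
    rw [← sum_pairs G ω (properEdges G χ') (hPEsub χ')]
    refine Finset.sum_congr rfl fun v _ => ?_
    rw [Finset.sum_filter]
    refine Finset.sum_congr rfl fun w hw => ?_
    have ha : G.Adj v w := (SimpleGraph.mem_neighborFinset G v w).1 hw
    by_cases hcond : χ' w = χ' v
    · simp [hgf, hcond, memPE χ' v w ha]
    · simp [hgf, hcond, memPE χ' v w ha]
  have E2 : ∑ v, ∑ w ∈ G.neighborFinset v, hf v w = 2 * ∑ e ∈ properEdges G χ, ω e := by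
    rw [← sum_pairs G ω (properEdges G χ) (hPEsub χ)]
    refine Finset.sum_congr rfl fun v _ => ?_
    rw [Finset.sum_filter]
    refine Finset.sum_congr rfl fun w hw => ?_
    have ha : G.Adj v w := (SimpleGraph.mem_neighborFinset G v w).1 hw
    by_cases hcond : χ w = χ v
    · simp [hhf, hcond, memPE χ v w ha]
    · simp [hhf, hcond, memPE χ v w ha]
  have E3 : ∑ v ∈ S', ∑ w ∈ G.neighborFinset v ∩ S', hf v w
      = 2 * ∑ e ∈ (properEdges G χ).filter (fun e => ∀ x ∈ e, x ∈ S'), ω e := by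
    rw [← sum_pairs G ω ((properEdges G χ).filter (fun e => ∀ x ∈ e, x ∈ S')) hPEsub2]
    have step1 : ∀ v ∈ S', ∑ w ∈ G.neighborFinset v ∩ S', hf v w
        = ∑ w ∈ (G.neighborFinset v).filter
            (fun w => s(v,w) ∈ (properEdges G χ).filter (fun e => ∀ x ∈ e, x ∈ S')), ω s(v,w) := by
      intro v hv
      rw [← Finset.filter_mem_eq_inter, Finset.sum_filter, Finset.sum_filter]
      refine Finset.sum_congr rfl fun w hw => ?_
      have ha : G.Adj v w := (SimpleGraph.mem_neighborFinset G v w).1 hw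
      have hmem : s(v,w) ∈ (properEdges G χ).filter (fun e => ∀ x ∈ e, x ∈ S')
          ↔ (¬ χ w = χ v) ∧ (v ∈ S' ∧ w ∈ S') := by
        rw [Finset.mem_filter, memPE χ v w ha, ball_sym2]
      by_cases h1 : w ∈ S' <;> by_cases h2 : χ w = χ v <;>
        simp [hhf, h1, h2, hmem, hv]
    rw [Finset.sum_congr rfl step1]
    refine Finset.sum_subset (Finset.subset_univ S') ?_
    intro v _ hv
    refine Finset.sum_eq_zero fun w hw => ?_
    exfalso
    have := (Finset.mem_filter.1 (Finset.mem_filter.1 hw).2).2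
    exact hv (this v (Sym2.mem_mk_left v w))
  -- decomposition of the two total sums
  have D1 := decomp G S' T R dST dSR dTR hU gf gsymm
  have D2 := decomp G S' T R dST dSR dTR hU hf hsymm
  -- bound on the S'×S' block
  have B1 : ∑ v ∈ S', ∑ w ∈ G.neighborFinset v ∩ S', gf v w
      ≤ (S'.card : ℚ) * ((S'.card : ℚ) - 1) * W := by
    have inner : ∀ v ∈ S', ∑ w ∈ G.neighborFinset v ∩ S', gf v w
        ≤ ((S'.card : ℚ) - 1) * W := by
      intro v hv
      have cardb : ((G.neighborFinset v ∩ S').card : ℚ) ≤ (S'.card : ℚ) - 1 := by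
        have hsub2 : G.neighborFinset v ∩ S' ⊆ S'.erase v := by
          intro w hw
          rcases Finset.mem_inter.1 hw with ⟨hw1, hw2⟩
          exact Finset.mem_erase.2
            ⟨((SimpleGraph.mem_neighborFinset G v w).1 hw1).ne', hw2⟩
        have hcle := Finset.card_le_card hsub2
        rw [Finset.card_erase_of_mem hv] at hcle
        have h1 : 1 ≤ S'.card := Finset.card_pos.2 ⟨v, hv⟩
        calc ((G.neighborFinset v ∩ S').card : ℚ) ≤ ((S'.card - 1 : ℕ) : ℚ) :=
              Nat.cast_le.2 hcle
          _ = (S'.card : ℚ) - 1 := by rw [Nat.cast_sub h1]; simp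
      calc ∑ w ∈ G.neighborFinset v ∩ S', gf v w
          ≤ ∑ w ∈ G.neighborFinset v ∩ S', W := by
            refine Finset.sum_le_sum fun w hw => ?_
            have ha : G.Adj v w :=
              (SimpleGraph.mem_neighborFinset G v w).1 (Finset.mem_inter.1 hw).1
            exact le_trans (ite_le_abs _ _) (hWb v w ha)
        _ = ((G.neighborFinset v ∩ S').card : ℚ) * W := by
            rw [Finset.sum_const, nsmul_eq_mul]
        _ ≤ ((S'.card : ℚ) - 1) * W := mul_le_mul_of_nonneg_right cardb hW0
    calc ∑ v ∈ S', ∑ w ∈ G.neighborFinset v ∩ S', gf v w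
        ≤ ∑ _v ∈ S', ((S'.card : ℚ) - 1) * W := Finset.sum_le_sum inner
      _ = (S'.card : ℚ) * ((S'.card : ℚ) - 1) * W := by
          rw [Finset.sum_const, nsmul_eq_mul]; ring
  -- S'-side bounds
  have S'side : ∀ v ∈ S',
      (∑ w ∈ G.neighborFinset v ∩ T, gf v w) + (∑ w ∈ G.neighborFinset v ∩ R, gf v w)
        ≤ mθ v + ∑ w ∈ G.neighborFinset v ∩ T, |ω s(v,w)| := by
    intro v hv
    have hvD : v ∈ D := hSD hv
    have key : ∀ i : ℕ,
        (∑ w ∈ G.neighborFinset v ∩ T, (if χ w ≠ i then ω s(v,w) else 0))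
        + (∑ w ∈ G.neighborFinset v ∩ R, (if χ w ≠ i then ω s(v,w) else 0)) = θ v i := by
      intro i
      rw [hθ v i]
      have hdisj : Disjoint (G.neighborFinset v ∩ T) (G.neighborFinset v ∩ R) :=
        dTR.mono Finset.inter_subset_right Finset.inter_subset_right
      rw [← Finset.sum_union hdisj]
      have hTR : G.neighborFinset v ∩ T ∪ G.neighborFinset v ∩ R
          = (G.neighborFinset v).filter (fun w => w ∉ S') := by
        rw [← Finset.inter_union_distrib_left]
        ext w
        simp only [Finset.mem_inter, Finset.mem_union, Finset.mem_filter, hTdef, hRdef,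
          Finset.mem_sdiff, Finset.mem_univ, true_and]
        constructor
        · rintro ⟨h1, h2 | h2⟩
          · exact ⟨h1, h2.2⟩
          · exact ⟨h1, fun hS => h2 (hSD hS)⟩
        · rintro ⟨h1, h2⟩
          refine ⟨h1, ?_⟩
          by_cases hD2 : w ∈ D
          · exact Or.inl ⟨hD2, h2⟩
          · exact Or.inr hD2
      rw [hTR, Finset.sum_filter, Finset.sum_filter]
      refine Finset.sum_congr rfl fun w _ => ?_
      by_cases h1 : w ∈ S' <;> by_cases h2 : χ w ≠ i <;> simp [h1, h2]
    have hgm : ∑ w ∈ G.neighborFinset v ∩ T, gf v w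
        ≤ ∑ w ∈ G.neighborFinset v ∩ T,
            ((if χ w ≠ χ' v then ω s(v,w) else 0) + |ω s(v,w)|) :=
      Finset.sum_le_sum fun w _ => ite_le_ite_add_abs _ _ _
    have hgR : ∑ w ∈ G.neighborFinset v ∩ R, gf v w
        = ∑ w ∈ G.neighborFinset v ∩ R, (if χ w ≠ χ' v then ω s(v,w) else 0) := by
      refine Finset.sum_congr rfl fun w hw => ?_
      have hwR : w ∉ D := (Finset.mem_sdiff.1 (Finset.mem_inter.1 hw).2).2
      rw [hgf]
      simp only
      rw [hfix w hwR]
    have hθle : θ v (χ' v) ≤ mθ v :=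
      (hmθ v).2 ⟨χ' v, hχ' v, fun hEq => hflip v hvD hEq.symm, rfl⟩
    have e1 : ∑ w ∈ G.neighborFinset v ∩ T,
          ((if χ w ≠ χ' v then ω s(v,w) else 0) + |ω s(v,w)|)
        = (∑ w ∈ G.neighborFinset v ∩ T, (if χ w ≠ χ' v then ω s(v,w) else 0))
          + ∑ w ∈ G.neighborFinset v ∩ T, |ω s(v,w)| := Finset.sum_add_distrib
    linarith [key (χ' v)]
  have S'sideh : ∀ v ∈ S',
      (∑ w ∈ G.neighborFinset v ∩ T, hf v w) + (∑ w ∈ G.neighborFinset v ∩ R, hf v w)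
        = θ v (χ v) := by
    intro v hv
    rw [hθ v (χ v)]
    have hdisj : Disjoint (G.neighborFinset v ∩ T) (G.neighborFinset v ∩ R) :=
      dTR.mono Finset.inter_subset_right Finset.inter_subset_right
    rw [← Finset.sum_union hdisj]
    have hTR : G.neighborFinset v ∩ T ∪ G.neighborFinset v ∩ R
        = (G.neighborFinset v).filter (fun w => w ∉ S') := by
      rw [← Finset.inter_union_distrib_left]
      ext w
      simp only [Finset.mem_inter, Finset.mem_union, Finset.mem_filter, hTdef, hRdef,
        Finset.mem_sdiff, Finset.mem_univ, true_and]
      constructor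
      · rintro ⟨h1, h2 | h2⟩
        · exact ⟨h1, h2.2⟩
        · exact ⟨h1, fun hS => h2 (hSD hS)⟩
      · rintro ⟨h1, h2⟩
        refine ⟨h1, ?_⟩
        by_cases hD2 : w ∈ D
        · exact Or.inl ⟨hD2, h2⟩
        · exact Or.inr hD2
    rw [hTR, Finset.sum_filter, Finset.sum_filter]
    refine Finset.sum_congr rfl fun w _ => ?_
    by_cases h1 : w ∈ S' <;> by_cases h2 : χ w ≠ χ v <;> simp [hhf, h1, h2]
  -- T-side bound
  have Tside : ∀ v ∈ T,
      (∑ w ∈ G.neighborFinset v ∩ R, gf v w)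
        ≤ (∑ w ∈ G.neighborFinset v ∩ R, hf v w) + mω v
          + (∑ w ∈ G.neighborFinset v ∩ S', |ω s(v,w)|)
          + ((∑ w ∈ G.neighborFinset v ∩ T, hf v w)
              - (∑ w ∈ G.neighborFinset v ∩ T, mf v w)) := by
    intro v hv
    have hvD : v ∈ D := (Finset.mem_sdiff.1 hv).1
    have hmsum : ∑ w ∈ G.neighborFinset v, mf v w = ωv v (χ' v) := by
      rw [hωv v (χ' v), Finset.sum_filter]
    have hhsum : ∑ w ∈ G.neighborFinset v, hf v w = ωv v (χ v) := by
      rw [hωv v (χ v), Finset.sum_filter]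
    have hsplitm := inner_split G S' T R dST dSR dTR hU (mf v) v
    have hsplith := inner_split G S' T R dST dSR dTR hU (hf v) v
    have hgR : ∑ w ∈ G.neighborFinset v ∩ R, gf v w
        = ∑ w ∈ G.neighborFinset v ∩ R, mf v w := by
      refine Finset.sum_congr rfl fun w hw => ?_
      have hwR : w ∉ D := (Finset.mem_sdiff.1 (Finset.mem_inter.1 hw).2).2
      rw [hgf, hmf]
      simp only
      rw [hfix w hwR]
    have hmle : ωv v (χ' v) - ωv v (χ v) ≤ mω v :=
      (hmω v).2 ⟨χ' v, hχ' v, fun hEq => hflip v hvD hEq.symm, rfl⟩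
    have hSbound : (∑ w ∈ G.neighborFinset v ∩ S', hf v w)
        - (∑ w ∈ G.neighborFinset v ∩ S', mf v w)
        ≤ ∑ w ∈ G.neighborFinset v ∩ S', |ω s(v,w)| := by
      rw [← Finset.sum_sub_distrib]
      exact Finset.sum_le_sum fun w _ => ite_sub_ite_le_abs _ _ _
    linarith
  -- summed versions
  have B3s : (∑ v ∈ S', ∑ w ∈ G.neighborFinset v ∩ T, gf v w)
      + (∑ v ∈ S', ∑ w ∈ G.neighborFinset v ∩ R, gf v w)
      ≤ (∑ v ∈ S', mθ v) + (∑ v ∈ S', ∑ w ∈ G.neighborFinset v ∩ T, |ω s(v,w)|) := by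
    have := Finset.sum_le_sum S'side
    rwa [Finset.sum_add_distrib, Finset.sum_add_distrib] at this
  have B3h : (∑ v ∈ S', ∑ w ∈ G.neighborFinset v ∩ T, hf v w)
      + (∑ v ∈ S', ∑ w ∈ G.neighborFinset v ∩ R, hf v w)
      = ∑ v ∈ S', θ v (χ v) := by
    have := Finset.sum_congr rfl S'sideh
    rwa [Finset.sum_add_distrib] at this
  have B4 : (∑ v ∈ T, ∑ w ∈ G.neighborFinset v ∩ R, gf v w)
      ≤ (∑ v ∈ T, ∑ w ∈ G.neighborFinset v ∩ R, hf v w) + (∑ v ∈ T, mω v)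
        + (∑ v ∈ T, ∑ w ∈ G.neighborFinset v ∩ S', |ω s(v,w)|)
        + ((∑ v ∈ T, ∑ w ∈ G.neighborFinset v ∩ T, hf v w)
            - (∑ v ∈ T, ∑ w ∈ G.neighborFinset v ∩ T, mf v w)) := by
    have := Finset.sum_le_sum Tside
    rwa [Finset.sum_add_distrib, Finset.sum_add_distrib, Finset.sum_add_distrib,
      Finset.sum_sub_distrib] at this
  -- T×T block bound
  have B5 : (∑ v ∈ T, ∑ w ∈ G.neighborFinset v ∩ T, gf v w)
      + (∑ v ∈ T, ∑ w ∈ G.neighborFinset v ∩ T, hf v w)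
      - 2 * (∑ v ∈ T, ∑ w ∈ G.neighborFinset v ∩ T, mf v w)
      ≤ (T.card : ℚ) * ((T.card : ℚ) - 1) * (2 * W) := by
    have combine : (∑ v ∈ T, ∑ w ∈ G.neighborFinset v ∩ T, gf v w)
        + (∑ v ∈ T, ∑ w ∈ G.neighborFinset v ∩ T, hf v w)
        - 2 * (∑ v ∈ T, ∑ w ∈ G.neighborFinset v ∩ T, mf v w)
        = ∑ v ∈ T, ∑ w ∈ G.neighborFinset v ∩ T,
            (gf v w + hf v w - 2 * mf v w) := by
      rw [Finset.mul_sum, ← Finset.sum_add_distrib, ← Finset.sum_sub_distrib]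
      refine Finset.sum_congr rfl fun v _ => ?_
      rw [Finset.mul_sum, ← Finset.sum_add_distrib, ← Finset.sum_sub_distrib]
    rw [combine]
    have inner : ∀ v ∈ T, ∑ w ∈ G.neighborFinset v ∩ T,
        (gf v w + hf v w - 2 * mf v w) ≤ ((T.card : ℚ) - 1) * (2 * W) := by
      intro v hv
      have cardb : ((G.neighborFinset v ∩ T).card : ℚ) ≤ (T.card : ℚ) - 1 := by
        have hsub2 : G.neighborFinset v ∩ T ⊆ T.erase v := by
          intro w hw
          rcases Finset.mem_inter.1 hw with ⟨hw1, hw2⟩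
          exact Finset.mem_erase.2
            ⟨((SimpleGraph.mem_neighborFinset G v w).1 hw1).ne', hw2⟩
        have hcle := Finset.card_le_card hsub2
        rw [Finset.card_erase_of_mem hv] at hcle
        have h1 : 1 ≤ T.card := Finset.card_pos.2 ⟨v, hv⟩
        calc ((G.neighborFinset v ∩ T).card : ℚ) ≤ ((T.card - 1 : ℕ) : ℚ) :=
              Nat.cast_le.2 hcle
          _ = (T.card : ℚ) - 1 := by rw [Nat.cast_sub h1]; simp
      calc ∑ w ∈ G.neighborFinset v ∩ T, (gf v w + hf v w - 2 * mf v w)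
          ≤ ∑ w ∈ G.neighborFinset v ∩ T, 2 * W := by
            refine Finset.sum_le_sum fun w hw => ?_
            have ha : G.Adj v w :=
              (SimpleGraph.mem_neighborFinset G v w).1 (Finset.mem_inter.1 hw).1
            exact le_trans (ite_comb_le_abs _ _ _ _)
              (by linarith [hWb v w ha])
        _ = ((G.neighborFinset v ∩ T).card : ℚ) * (2 * W) := by
            rw [Finset.sum_const, nsmul_eq_mul]
        _ ≤ ((T.card : ℚ) - 1) * (2 * W) :=
            mul_le_mul_of_nonneg_right cardb (by linarith)
    calc ∑ v ∈ T, ∑ w ∈ G.neighborFinset v ∩ T, (gf v w + hf v w - 2 * mf v w)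
        ≤ ∑ _v ∈ T, ((T.card : ℚ) - 1) * (2 * W) := Finset.sum_le_sum inner
      _ = (T.card : ℚ) * ((T.card : ℚ) - 1) * (2 * W) := by
          rw [Finset.sum_const, nsmul_eq_mul]; ring
  -- R×R block unchanged
  have B6 : (∑ v ∈ R, ∑ w ∈ G.neighborFinset v ∩ R, gf v w)
      = ∑ v ∈ R, ∑ w ∈ G.neighborFinset v ∩ R, hf v w := by
    refine Finset.sum_congr rfl fun v hv => Finset.sum_congr rfl fun w hw => ?_
    have hvR : v ∉ D := (Finset.mem_sdiff.1 hv).2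
    have hwR : w ∉ D := (Finset.mem_sdiff.1 (Finset.mem_inter.1 hw).2).2
    rw [hgf, hhf]
    simp only
    rw [hfix v hvR, hfix w hwR]
  -- symmetry of the absolute-value cross sum
  have B7 : (∑ v ∈ S', ∑ w ∈ G.neighborFinset v ∩ T, |ω s(v,w)|)
      = ∑ v ∈ T, ∑ w ∈ G.neighborFinset v ∩ S', |ω s(v,w)| :=
    symswap G (fun v w => |ω s(v,w)|) asymm S' T
  -- α over T
  have B8 : ∑ v ∈ T, α v
      = (∑ v ∈ T, mω v) + 2 * (∑ v ∈ T, ∑ w ∈ G.neighborFinset v ∩ S', |ω s(v,w)|) := by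
    rw [Finset.sum_congr rfl (fun v (_ : v ∈ T) => hα v), Finset.sum_add_distrib]
    congr 1
    rw [Finset.mul_sum]
    refine Finset.sum_congr rfl fun v _ => ?_
    rw [Finset.mul_sum]
  -- compare T with Y
  have hTY : (T \ Y).card = (Y \ T).card := by
    have a1 := Finset.card_sdiff_add_card_inter T Y
    have a2 := Finset.card_sdiff_add_card_inter Y T
    have a3 : (T ∩ Y).card = (Y ∩ T).card := by rw [Finset.inter_comm]
    have a4 : T.card = Y.card := by rw [hTcard, hYcard]
    omega
  have B9 : ∑ v ∈ T, α v ≤ ∑ v ∈ Y, α v := by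
    have hs1 : ∑ v ∈ T, α v = (∑ v ∈ T ∩ Y, α v) + ∑ v ∈ T \ Y, α v :=
      (Finset.sum_inter_add_sum_sdiff T Y α).symm
    have hs2 : ∑ v ∈ Y, α v = (∑ v ∈ T ∩ Y, α v) + ∑ v ∈ Y \ T, α v := by
      rw [Finset.inter_comm]
      exact (Finset.sum_inter_add_sum_sdiff Y T α).symm
    have key : ∑ v ∈ T \ Y, α v ≤ ∑ v ∈ Y \ T, α v := by
      rcases (Y \ T).eq_empty_or_nonempty with hYT | hYT
      · have hTY0 : T \ Y = ∅ := Finset.card_eq_zero.1 (by rw [hTY, hYT]; simp)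
        simp [hTY0, hYT]
      · have hM : ∀ w ∈ T \ Y, α w ≤ (Y \ T).inf' hYT α := by
          intro w hw
          have hwT := Finset.mem_sdiff.1 hw
          refine Finset.le_inf' hYT α fun v hv => ?_
          exact hYmax w (Finset.disjoint_right.1 dST hwT.1) hwT.2 v
            (Finset.mem_sdiff.1 hv).1
        calc ∑ v ∈ T \ Y, α v ≤ (T \ Y).card • ((Y \ T).inf' hYT α) :=
              Finset.sum_le_card_nsmul _ _ _ hM
          _ = (Y \ T).card • ((Y \ T).inf' hYT α) := by rw [hTY]
          _ ≤ ∑ v ∈ Y \ T, α v :=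
              Finset.card_nsmul_le_sum _ _ _ (fun v hv => Finset.inf'_le α hv)
    linarith
  -- final arithmetic
  have B10 : ∑ v ∈ S', (mθ v - θ v (χ v)) = (∑ v ∈ S', mθ v) - ∑ v ∈ S', θ v (χ v) :=
    Finset.sum_sub_distrib _ _
  have c1 : (S'.card : ℚ) * ((S'.card : ℚ) - 1) * W
      = 2 * (Nat.choose S'.card 2 : ℚ) * W := by
    linear_combination (-W) * two_choose_q S'.card
  have c2 : (T.card : ℚ) * ((T.card : ℚ) - 1) * (2 * W)
      = 4 * (Nat.choose (k - S'.card) 2 : ℚ) * W := by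
    rw [hTcard]
    linear_combination (-2 * W) * two_choose_q (k - S'.card)
  linarith [E1, E2, E3, D1, D2, B1, B3s, B3h, B4, B5, B6, B7, B8, B9, B10, c1, c2]
end

section
/- Let G=(V,E) be a finite simple graph, k a positive integer, and let χ, χ', χ̃ be c-colorings of G. Let D := D_flip(χ',χ̃) and suppose that |D| = k, the induced subgraph G[D] is connected, and there is a vertex v ∈ D whose distance in G to every vertex of D_flip(χ,χ') is at least k+1. Let χ̂ be the c-coloring that agrees with χ̃ on D and with χ on V\D, and let X ⊆ E be the set of edges with at least one endpoint in D. Then: (a) E(χ̃)\X = E(χ')\X and E(χ̂)\X = E(χ)\X; and (b) E(χ̃) ∩ X = E(χ̂) ∩ X and E(χ) ∩ X = E(χ') ∩ X. -/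
open Finset
open scoped Classical

lemma mem_flipSet_iff {V : Type*} [Fintype V] {α : Type*} (χ χ' : V → α) (x : V) :
    x ∈ flipSet χ χ' ↔ χ x ≠ χ' x := by
  simp [flipSet]

lemma mem_properEdges_pair {V : Type*} [Fintype V] {α : Type*}
    (G : SimpleGraph V) (χ : V → α) (a b : V) :
    s(a,b) ∈ properEdges G χ ↔ G.Adj a b ∧ χ a ≠ χ b := by
  simp [properEdges]

/-- Let `D := D_flip(χ',χt)` with `|D| = k` and `G[D]` connected, and suppose
some `v ∈ D` has distance at least `k+1` in `G` to every vertex of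
`D_flip(χ,χ')` (including the case that no path exists). Let `χh` agree with
`χt` on `D` and with `χ` elsewhere, and let `X` be the set of edges with at
least one endpoint in `D`. Then
(a) `E(χt) \ X = E(χ') \ X` and `E(χh) \ X = E(χ) \ X`, and
(b) `E(χt) ∩ X = E(χh) ∩ X` and `E(χ) ∩ X = E(χ') ∩ X`. -/
theorem properly_colored_edges_split
    {V : Type*} [Fintype V] [DecidableEq V] {c : ℕ}
    (G : SimpleGraph V) (k : ℕ) (hk : 1 ≤ k)
    (χ χ' χt : V → Fin c)
    (D : Finset V) (hD : D = flipSet χ' χt)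
    (hDcard : D.card = k)
    (hDconn : (G.induce (↑D : Set V)).Connected)
    (v : V) (hv : v ∈ D)
    (hdist : ∀ w ∈ flipSet χ χ', ¬ G.Reachable v w ∨ k + 1 ≤ G.dist v w)
    (χh : V → Fin c) (hχh : χh = fun x => if x ∈ D then χt x else χ x)
    (X : Finset (Sym2 V))
    (hX : X = G.edgeFinset.filter fun e => ∃ x ∈ e, x ∈ D) :
    (properEdges G χt \ X = properEdges G χ' \ X ∧
      properEdges G χh \ X = properEdges G χ \ X) ∧
    (properEdges G χt ∩ X = properEdges G χh ∩ X ∧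
      properEdges G χ ∩ X = properEdges G χ' ∩ X) := by
  have hnotD : ∀ x : V, x ∉ D → χ' x = χt x := by
    intro x hx
    by_contra h
    exact hx (hD ▸ ((mem_flipSet_iff χ' χt x).mpr h))
  -- there is a walk from v to each d ∈ D of length ≤ k - 1
  have hDd : ∀ d ∈ D, ∃ p : G.Walk v d, p.length ≤ k - 1 := by
    intro d hd
    obtain ⟨p0⟩ := hDconn ⟨v, hv⟩ ⟨d, hd⟩
    set p : (G.induce (↑D : Set V)).Walk ⟨v, hv⟩ ⟨d, hd⟩ := p0.bypass with hp
    have hpath : p.IsPath := p0.bypass_isPath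
    have hlen : p.length < Fintype.card (↑D : Set V) := hpath.length_lt
    have hcard : Fintype.card (↑D : Set V) = k := by simpa using hDcard
    let f : G.induce (↑D : Set V) ↪g G := SimpleGraph.Embedding.induce (↑D : Set V)
    refine ⟨(p.map f.toHom).copy rfl rfl, ?_⟩
    show (p.map f.toHom).length ≤ k - 1
    rw [SimpleGraph.Walk.length_map]
    omega
  -- key lemma: χ = χ' on D and its neighbors
  have hkey : ∀ x : V, (x ∈ D ∨ ∃ d ∈ D, G.Adj d x) → χ x = χ' x := by
    intro x hx
    by_contra h
    have hxf : x ∈ flipSet χ χ' := (mem_flipSet_iff χ χ' x).mpr h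
    have hrd : G.Reachable v x ∧ G.dist v x ≤ k := by
      rcases hx with hx | ⟨d, hd, hadj⟩
      · obtain ⟨p, hp⟩ := hDd x hx
        exact ⟨⟨p⟩, le_trans (SimpleGraph.dist_le p) (by omega)⟩
      · obtain ⟨p, hp⟩ := hDd d hd
        refine ⟨⟨p.concat hadj⟩, le_trans (SimpleGraph.dist_le (p.concat hadj)) ?_⟩
        rw [SimpleGraph.Walk.length_concat]
        omega
    rcases hdist x hxf with h1 | h2
    · exact h1 hrd.1
    · omega
  -- agreement on endpoints of edges in X
  have hagree : ∀ a b : V, G.Adj a b → (a ∈ D ∨ b ∈ D) →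
      χt a = χh a ∧ χt b = χh b ∧ χ a = χ' a ∧ χ b = χ' b := by
    intro a b hadj hab
    have hca : χ a = χ' a := hkey a (hab.imp id fun h => ⟨b, h, hadj.symm⟩)
    have hcb : χ b = χ' b := hkey b (hab.symm.imp id fun h => ⟨a, h, hadj⟩)
    refine ⟨?_, ?_, hca, hcb⟩
    · rw [hχh]
      by_cases h : a ∈ D
      · simp [h]
      · simp only [h, if_false]
        rw [← hnotD a h, ← hca]
    · rw [hχh]
      by_cases h : b ∈ D
      · simp [h]
      · simp only [h, if_false]
        rw [← hnotD b h, ← hcb]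
  -- membership in X for pairs
  have hXmem : ∀ a b : V, G.Adj a b → (s(a,b) ∈ X ↔ (a ∈ D ∨ b ∈ D)) := by
    intro a b hadj
    rw [hX]
    simp [hadj]
  have hsdiff : ∀ χ1 χ2 : V → Fin c, (∀ a b : V, G.Adj a b → a ∉ D → b ∉ D → (χ1 a = χ1 b ↔ χ2 a = χ2 b)) →
      properEdges G χ1 \ X = properEdges G χ2 \ X := by
    intro χ1 χ2 hcong
    ext e
    induction e using Sym2.inductionOn with
    | hf a b =>
      simp only [mem_sdiff, mem_properEdges_pair]
      constructor <;> rintro ⟨⟨hadj, hne⟩, hnx⟩ <;>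
        [ (have hm := (hXmem a b hadj).not.mp hnx; push_neg at hm;
           exact ⟨⟨hadj, fun h => hne ((hcong a b hadj hm.1 hm.2).mpr h)⟩, hnx⟩);
          (have hm := (hXmem a b hadj).not.mp hnx; push_neg at hm;
           exact ⟨⟨hadj, fun h => hne ((hcong a b hadj hm.1 hm.2).mp h)⟩, hnx⟩)]
  have hinter : ∀ χ1 χ2 : V → Fin c, (∀ a b : V, G.Adj a b → (a ∈ D ∨ b ∈ D) → (χ1 a = χ1 b ↔ χ2 a = χ2 b)) →
      properEdges G χ1 ∩ X = properEdges G χ2 ∩ X := by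
    intro χ1 χ2 hcong
    ext e
    induction e using Sym2.inductionOn with
    | hf a b =>
      simp only [mem_inter, mem_properEdges_pair]
      constructor <;> rintro ⟨⟨hadj, hne⟩, hx⟩ <;>
        [ (have hm := (hXmem a b hadj).mp hx;
           exact ⟨⟨hadj, fun h => hne ((hcong a b hadj hm).mpr h)⟩, hx⟩);
          (have hm := (hXmem a b hadj).mp hx;
           exact ⟨⟨hadj, fun h => hne ((hcong a b hadj hm).mp h)⟩, hx⟩)]
  refine ⟨⟨?_, ?_⟩, ?_, ?_⟩
  · exact hsdiff χt χ' fun a b hadj ha hb => by rw [← hnotD a ha, ← hnotD b hb]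
  · exact hsdiff χh χ fun a b hadj ha hb => by rw [hχh]; simp [ha, hb]
  · exact hinter χt χh fun a b hadj hm => by
      obtain ⟨h1, h2, -, -⟩ := hagree a b hadj hm
      rw [h1, h2]
  · exact hinter χ χ' fun a b hadj hm => by
      obtain ⟨-, -, h3, h4⟩ := hagree a b hadj hm
      rw [h3, h4]
end

section
/- Let G=(V,E) be a finite simple graph with n := |V|, let (A,B) be a partition of V, and let k be a positive integer. Let G' be the graph obtained from G by adding a set Z of n + 2k new isolated vertices, let Z_A ⊆ Z with |Z_A| = |B| + k, and set X := A ∪ Z_A and Y := B ∪ (Z\Z_A). Then: (i) |X| = |Y|, i.e., (X,Y) is a balanced partition of V ∪ Z; (ii) for every partition (X',Y') of V ∪ Z, the set of cut edges of G' with respect to (X',Y') equals E(X' ∩ V, Y' ∩ V), the set of edges of G with one endpoint in X' ∩ V and one in Y' ∩ V; and (iii) if there is a partition (A',B') of V with |E(A',B')| > |E(A,B)| and |A ⊕ A'| ≤ k, then there is a balanced partition (X',Y') of V ∪ Z with strictly more cut edges in G' than (X,Y) and with |X ⊕ X'| ≤ 2k. -/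
/-! The padding vertices `Z` are isolated, so a cut of `G'` only sees the edges of `G` between the
two sides within `V`. An improving flip `A → A'` changes `|A|` by at most `|A ⊕ A'| ≤ k`; moving
the same number of padding vertices across rebalances the partition, for a total flip distance
of at most `2k`. -/

open Finset
open scoped Classical

/-- The cut edges of the partition `(X,Y)` in the graph `H`: the edges of `H`
with one endpoint in `X` and one endpoint in `Y`. -/
noncomputable def cutEdges {W : Type*} [Fintype W] (H : SimpleGraph W)
    (X Y : Finset W) : Finset (Sym2 W) :=
  H.edgeFinset.filter fun e => (∃ x ∈ e, x ∈ X) ∧ (∃ y ∈ e, y ∈ Y)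

theorem cutEdges_map {V W : Type*} [Fintype V] [Fintype W] [DecidableEq W]
    (G : SimpleGraph V) (f : V ↪ W) (X Y : Finset W) :
    cutEdges (G.map f) X Y =
      (cutEdges G (univ.filter fun v => f v ∈ X) (univ.filter fun v => f v ∈ Y)).image
        (Sym2.map f) := by
  ext e
  simp only [cutEdges, mem_filter, mem_image, SimpleGraph.mem_edgeFinset, mem_univ, true_and,
    SimpleGraph.edgeSet_map]
  constructor
  · rintro ⟨⟨a, ha, rfl⟩, h⟩
    exact ⟨a, ⟨ha, by simpa [Sym2.mem_map] using h⟩, rfl⟩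
  · rintro ⟨a, ⟨ha, h⟩, rfl⟩
    exact ⟨⟨a, ha, rfl⟩, by simpa [Sym2.mem_map] using h⟩

theorem card_cutEdges_map {V W : Type*} [Fintype V] [Fintype W] [DecidableEq W]
    (G : SimpleGraph V) (f : V ↪ W) (X Y : Finset W) :
    #(cutEdges (G.map f) X Y) =
      #(cutEdges G (univ.filter fun v => f v ∈ X) (univ.filter fun v => f v ∈ Y)) := by
  rw [cutEdges_map, card_image_of_injective _ (Sym2.map.injective f.injective)]

namespace Finset

variable {α β : Type*}

theorem image_inl_union_image_inr [DecidableEq α] [DecidableEq β] (s : Finset α) (t : Finset β) :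
    s.image Sum.inl ∪ t.image Sum.inr = s.disjSum t := by
  ext x; cases x <;> simp

theorem disjSum_symmDiff_disjSum [DecidableEq α] [DecidableEq β] (s s' : Finset α)
    (t t' : Finset β) :
    symmDiff (s.disjSum t) (s'.disjSum t') = (symmDiff s s').disjSum (symmDiff t t') := by
  ext x; cases x <;> simp [mem_symmDiff]

theorem disjoint_disjSum_disjSum {s s' : Finset α} {t t' : Finset β} (hs : Disjoint s s')
    (ht : Disjoint t t') :
    Disjoint (s.disjSum t) (s'.disjSum t') := by
  rw [disjoint_left] at *
  rintro (a | b) <;> simp only [inl_mem_disjSum, inr_mem_disjSum]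
  exacts [@hs a, @ht b]

theorem disjSum_union_disjSum [DecidableEq α] [DecidableEq β] (s s' : Finset α)
    (t t' : Finset β) :
    s.disjSum t ∪ s'.disjSum t' = (s ∪ s').disjSum (t ∪ t') := by
  ext x; cases x <;> simp

theorem card_le_card_add_card_symmDiff [DecidableEq α] (s t : Finset α) :
    #s ≤ #t + #(symmDiff s t) := by
  calc #s ≤ #(t ∪ symmDiff s t) := card_le_card fun a ha => by
          by_cases h : a ∈ t <;> simp [mem_symmDiff, h, ha]
    _ ≤ #t + #(symmDiff s t) := card_union_le _ _

theorem exists_card_eq_card_symmDiff_le [Fintype α] [DecidableEq α] (s : Finset α) {n d : ℕ}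
    (hn : n ≤ Fintype.card α) (hsn : #s ≤ n + d) (hns : n ≤ #s + d) :
    ∃ t : Finset α, #t = n ∧ #(symmDiff s t) ≤ d := by
  rcases le_total n #s with hle | hle
  · obtain ⟨t, hts, rfl⟩ := exists_subset_card_eq hle
    refine ⟨t, rfl, ?_⟩
    rw [symmDiff_of_ge hts, card_sdiff_of_subset hts]
    omega
  · obtain ⟨t, hst, rfl⟩ := exists_superset_card_eq hle (hn.trans_eq (card_univ).symm)
    refine ⟨t, rfl, ?_⟩
    rw [symmDiff_of_le hst, card_sdiff_of_subset hst]
    omega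

end Finset

theorem bisection_reduction_general
    {V : Type*} [Fintype V] [DecidableEq V] (G : SimpleGraph V)
    (k : ℕ)
    (A B : Finset V) (hdisj : Disjoint A B) (hcover : A ∪ B = Finset.univ)
    (Z_A : Finset (Fin (Fintype.card V + 2 * k)))
    (hZA : Z_A.card = B.card + k) :
    let G' : SimpleGraph (V ⊕ Fin (Fintype.card V + 2 * k)) :=
      G.map Function.Embedding.inl
    let X : Finset (V ⊕ Fin (Fintype.card V + 2 * k)) :=
      A.image Sum.inl ∪ Z_A.image Sum.inr
    let Y : Finset (V ⊕ Fin (Fintype.card V + 2 * k)) :=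
      B.image Sum.inl ∪ (Finset.univ \ Z_A).image Sum.inr
    -- (i) `(X,Y)` is a balanced partition
    (X.card = Y.card) ∧
    -- (ii) the cut edges of `G'` w.r.t. any partition `(X',Y')` are exactly
    -- the edges of `G` between `X' ∩ V` and `Y' ∩ V`
    (∀ X' Y' : Finset (V ⊕ Fin (Fintype.card V + 2 * k)),
      Disjoint X' Y' → X' ∪ Y' = Finset.univ →
      cutEdges G' X' Y' =
        (cutEdges G (Finset.univ.filter fun v => Sum.inl v ∈ X')
            (Finset.univ.filter fun v => Sum.inl v ∈ Y')).image
          (Sym2.map Sum.inl)) ∧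
    -- (iii)
    ((∃ A' B' : Finset V, Disjoint A' B' ∧ A' ∪ B' = Finset.univ ∧
        (cutEdges G A B).card < (cutEdges G A' B').card ∧
        (symmDiff A A').card ≤ k) →
      ∃ X' Y' : Finset (V ⊕ Fin (Fintype.card V + 2 * k)),
        Disjoint X' Y' ∧ X' ∪ Y' = Finset.univ ∧
        X'.card ≤ Y'.card + 1 ∧ Y'.card ≤ X'.card + 1 ∧
        (cutEdges G' X Y).card < (cutEdges G' X' Y').card ∧
        (symmDiff X X').card ≤ 2 * k) := by
  dsimp only
  rw [image_inl_union_image_inr, image_inl_union_image_inr, ← compl_eq_univ_sdiff]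
  have hcard : #A + #B = Fintype.card V := by
    rw [← card_union_of_disjoint hdisj, hcover, card_univ]
  refine ⟨?_, fun X' Y' _ _ => cutEdges_map G _ X' Y', ?_⟩
  · rw [card_disjSum, card_disjSum, card_compl, Fintype.card_fin]
    omega
  rintro ⟨A', B', hdisj', hcover', hcut, hflip⟩
  have hcard' : #A' + #B' = Fintype.card V := by
    rw [← card_union_of_disjoint hdisj', hcover', card_univ]
  have hAA' := card_le_card_add_card_symmDiff A A'
  have hA'A := card_le_card_add_card_symmDiff A' A
  rw [symmDiff_comm] at hA'A
  obtain ⟨Z', hZ', hflipZ⟩ := exists_card_eq_card_symmDiff_le Z_A (n := #B' + k)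
    (d := #(symmDiff A A')) (by rw [Fintype.card_fin]; omega) (by omega) (by omega)
  have hbalanced : #(A'.disjSum Z') = #(B'.disjSum Z'ᶜ) := by
    rw [card_disjSum, card_disjSum, card_compl, Fintype.card_fin]
    omega
  refine ⟨A'.disjSum Z', B'.disjSum Z'ᶜ, disjoint_disjSum_disjSum hdisj' disjoint_compl_right,
    by rw [disjSum_union_disjSum, hcover', union_compl, univ_disjSum_univ],
    hbalanced.le.trans (Nat.le_succ _), hbalanced.ge.trans (Nat.le_succ _), ?_, ?_⟩
  · simpa only [card_cutEdges_map, Function.Embedding.inl_apply, inl_mem_disjSum, subset_univ,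
      filter_mem_eq_of_subset] using hcut
  · rw [disjSum_symmDiff_disjSum, card_disjSum]
    omega

/-- Reduction from `LS Max Cut` to `LS Max Bisection`: add a set `Z` of
`n + 2k` isolated vertices to `G` (yielding `G'`), and balance the starting
partition using a set `Z_A ⊆ Z` of `|B| + k` of them. Then (i) the resulting
partition `(X,Y)` is balanced, (ii) the cut of `G'` with respect to any
partition `(X',Y')` consists precisely of the `G`-edges between `X' ∩ V` and
`Y' ∩ V`, and (iii) any improving `k`-flip for `(A,B)` in `G` yields an
improving balanced partition within flip distance `2k` of `(X,Y)` in `G'`. -/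
theorem bisection_reduction
    {V : Type*} [Fintype V] [DecidableEq V] (G : SimpleGraph V)
    (k : ℕ) (hk : 1 ≤ k)
    (A B : Finset V) (hdisj : Disjoint A B) (hcover : A ∪ B = Finset.univ)
    (Z_A : Finset (Fin (Fintype.card V + 2 * k)))
    (hZA : Z_A.card = B.card + k) :
    let G' : SimpleGraph (V ⊕ Fin (Fintype.card V + 2 * k)) :=
      G.map Function.Embedding.inl
    let X : Finset (V ⊕ Fin (Fintype.card V + 2 * k)) :=
      A.image Sum.inl ∪ Z_A.image Sum.inr
    let Y : Finset (V ⊕ Fin (Fintype.card V + 2 * k)) :=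
      B.image Sum.inl ∪ (Finset.univ \ Z_A).image Sum.inr
    -- (i) `(X,Y)` is a balanced partition
    (X.card = Y.card) ∧
    -- (ii) the cut edges of `G'` w.r.t. any partition `(X',Y')` are exactly
    -- the edges of `G` between `X' ∩ V` and `Y' ∩ V`
    (∀ X' Y' : Finset (V ⊕ Fin (Fintype.card V + 2 * k)),
      Disjoint X' Y' → X' ∪ Y' = Finset.univ →
      cutEdges G' X' Y' =
        (cutEdges G (Finset.univ.filter fun v => Sum.inl v ∈ X')
            (Finset.univ.filter fun v => Sum.inl v ∈ Y')).image
          (Sym2.map Sum.inl)) ∧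
    -- (iii)
    ((∃ A' B' : Finset V, Disjoint A' B' ∧ A' ∪ B' = Finset.univ ∧
        (cutEdges G A B).card < (cutEdges G A' B').card ∧
        (symmDiff A A').card ≤ k) →
      ∃ X' Y' : Finset (V ⊕ Fin (Fintype.card V + 2 * k)),
        Disjoint X' Y' ∧ X' ∪ Y' = Finset.univ ∧
        X'.card ≤ Y'.card + 1 ∧ Y'.card ≤ X'.card + 1 ∧
        (cutEdges G' X Y).card < (cutEdges G' X' Y').card ∧
        (symmDiff X X').card ≤ 2 * k) :=
  bisection_reduction_general G k A B hdisj hcover Z_A hZA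
end

section
/- Let c > 2, let G=(V,E) be a finite simple graph with n := |V| ≥ 2, and let G'=(V',E') be the graph obtained from G by adding pairwise disjoint independent sets X_1, …, X_c, each of size n², disjoint from V, together with the following edges: for all i ≠ j, every vertex of X_i is adjacent to every vertex of X_j, and for every i ∈ {3,…,c}, every vertex of X_i is adjacent to every vertex of V (no other edges are added). Then every c-coloring χ* of G' that maximizes the number of properly colored edges of G' properly colors every edge of E'\E; moreover, for every such χ* there is a bijection π: {1,…,c} → {1,…,c} such that for every i ∈ {1,…,c} every vertex of X_i has color π(i) under χ*, and every vertex of V has color π(1) or π(2) under χ*. -/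
open Finset
open scoped Classical

/-- The graph `G'` obtained from `G` by adding `c` pairwise disjoint
independent sets `X_1, …, X_c` (here `X_i` is `{i} × Fin (n^2)`, indexed
`0`-based by `i : Fin c`), each of size `n²`, such that all vertices of
distinct sets `X_i`, `X_j` are adjacent and, for every `i ∈ {3,…,c}`
(`0`-based: `2 ≤ i`), all vertices of `X_i` are adjacent to all vertices
of `V`. -/
def extGraph {V : Type*} [Fintype V] (G : SimpleGraph V) (c : ℕ) :
    SimpleGraph (V ⊕ (Fin c × Fin (Fintype.card V ^ 2))) :=
  SimpleGraph.fromRel fun a b =>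
    match a, b with
    | Sum.inl u, Sum.inl v => G.Adj u v
    | Sum.inl _, Sum.inr (i, _) => 2 ≤ (i : ℕ)
    | Sum.inr _, Sum.inl _ => False
    | Sum.inr (i, _), Sum.inr (j, _) => i ≠ j

lemma pairs_card_eq_two_mul_properEdges {U : Type*} [Fintype U] {α : Type*}
    (Γ : SimpleGraph U) (χ : U → α) :
    (univ.filter fun p : U × U => Γ.Adj p.1 p.2 ∧ χ p.1 ≠ χ p.2).card
      = 2 * (properEdges Γ χ).card := by
  classical
  let H : SimpleGraph U :=
    { Adj := fun a b => Γ.Adj a b ∧ χ a ≠ χ b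
      symm := ⟨fun a b hab => ⟨hab.1.symm, hab.2.symm⟩⟩
      loopless := ⟨fun a h => h.2 rfl⟩ }
  have hE : H.edgeFinset = properEdges Γ χ := by
    ext e
    induction e using Sym2.ind with
    | _ a b =>
      simp [properEdges, SimpleGraph.mem_edgeFinset, SimpleGraph.mem_edgeSet, H,
        Sym2.isDiag_iff_proj_eq]
  have hD : Fintype.card H.Dart
      = (univ.filter fun p : U × U => Γ.Adj p.1 p.2 ∧ χ p.1 ≠ χ p.2).card := by
    let e : H.Dart ≃ {p : U × U // Γ.Adj p.1 p.2 ∧ χ p.1 ≠ χ p.2} :=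
      { toFun := fun d => ⟨d.toProd, d.adj⟩
        invFun := fun p => ⟨p.1, p.2⟩
        left_inv := fun d => rfl
        right_inv := fun p => rfl }
    rw [Fintype.card_congr e, Fintype.card_subtype]
  rw [← hD, SimpleGraph.dart_card_eq_twice_card_edges, hE]


lemma card_filter_split {α : Type*} [Fintype α] (r p : α → Prop)
    {i1 : DecidablePred fun a => r a ∧ p a} {i2 : DecidablePred fun a => r a ∧ ¬ p a}
    {i3 : DecidablePred r} :
    (@Finset.filter α (fun a => r a ∧ p a) i1 univ).card
      + (@Finset.filter α (fun a => r a ∧ ¬ p a) i2 univ).card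
      = (@Finset.filter α r i3 univ).card := by
  classical
  have h1 : (@Finset.filter α (fun a => r a ∧ p a) i1 univ)
      = (univ.filter r).filter (fun a => p a) := by
    ext a; simp [Finset.mem_filter, and_assoc]
  have h2 : (@Finset.filter α (fun a => r a ∧ ¬ p a) i2 univ)
      = (univ.filter r).filter (fun a => ¬ p a) := by
    ext a; simp [Finset.mem_filter, and_assoc]
  have h3 : (@Finset.filter α r i3 univ) = univ.filter r := by
    ext a; simp [Finset.mem_filter]
  rw [h1, h2, h3]
  exact Finset.card_filter_add_card_filter_not (fun a => p a)

lemma row_sq_bound {c N : ℕ} (f : Fin c → ℕ) (hsum : ∑ k, f k = N)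
    {k₁ k₂ : Fin c} (hk : k₁ ≠ k₂) (h1 : 1 ≤ f k₁) (h2 : 1 ≤ f k₂) :
    ∑ k, f k ^ 2 + 2 * (N - 1) ≤ N ^ 2 := by
  classical
  obtain ⟨ks, -, hmax⟩ := Finset.exists_max_image (univ : Finset (Fin c)) f ⟨k₁, mem_univ _⟩
  set m := f ks with hm
  set E := ∑ k ∈ univ.erase ks, f k with hE
  have hmE : m + E = N := by rw [hm, hE, Finset.add_sum_erase _ f (mem_univ ks), hsum]
  have hm1 : 1 ≤ m := le_trans h1 (hmax k₁ (mem_univ _))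
  have hE1 : 1 ≤ E := by
    rcases eq_or_ne ks k₁ with h | h
    · calc 1 ≤ f k₂ := h2
        _ ≤ E := Finset.single_le_sum (fun _ _ => Nat.zero_le _)
            (Finset.mem_erase.mpr ⟨by rw [h]; exact hk.symm, mem_univ _⟩)
    · calc 1 ≤ f k₁ := h1
        _ ≤ E := Finset.single_le_sum (fun _ _ => Nat.zero_le _)
            (Finset.mem_erase.mpr ⟨h.symm, mem_univ _⟩)
  -- N^2 = ∑ f² + cross, cross ≥ 2 m E
  have hexp : N ^ 2 = ∑ k, f k ^ 2 + ∑ k, (f k * ∑ l ∈ univ.erase k, f l) := by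
    have : N ^ 2 = ∑ k, ∑ l, f k * f l := by
      rw [← hsum, sq, Finset.sum_mul_sum]
    rw [this, ← Finset.sum_add_distrib]
    refine Finset.sum_congr rfl fun k _ => ?_
    rw [← Finset.mul_sum, ← Finset.add_sum_erase _ f (mem_univ k), Nat.mul_add, sq]
  have hcross : 2 * (m * E) ≤ ∑ k, (f k * ∑ l ∈ univ.erase k, f l) := by
    rw [← Finset.add_sum_erase _ _ (mem_univ ks)]
    have h2' : E * m ≤ ∑ k ∈ univ.erase ks, (f k * ∑ l ∈ univ.erase k, f l) := by
      rw [hE, Finset.sum_mul]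
      refine Finset.sum_le_sum fun k hkks => ?_
      have : f ks ≤ ∑ l ∈ univ.erase k, f l :=
        Finset.single_le_sum (fun _ _ => Nat.zero_le _)
          (Finset.mem_erase.mpr ⟨(Finset.mem_erase.mp hkks).1.symm, mem_univ _⟩)
      exact Nat.mul_le_mul_left _ this
    have : m * E + E * m ≤ _ := Nat.add_le_add le_rfl h2'
    calc 2 * (m * E) = m * E + E * m := by ring
      _ ≤ _ := Nat.add_le_add le_rfl h2'
  have hme : N - 1 ≤ m * E := by
    obtain ⟨m', hm'⟩ := Nat.exists_eq_add_of_le hm1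
    obtain ⟨E', hE'⟩ := Nat.exists_eq_add_of_le hE1
    have hx : (1 + m') * (1 + E') = m' * E' + m' + E' + 1 := by ring
    rw [hm', hE']
    omega
  omega

lemma alg_bound {c N : ℕ} (a : Fin c → Fin c → ℕ)
    (hrow : ∀ i, ∑ k, a i k = N) {i₀ k₁ k₂ : Fin c} (hk : k₁ ≠ k₂)
    (h1 : 1 ≤ a i₀ k₁) (h2 : 1 ≤ a i₀ k₂) :
    2 * (N - 1) ≤ ∑ ij ∈ (univ : Finset (Fin c)).offDiag, ∑ k, a ij.1 k * a ij.2 k := by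
  classical
  have hc0 : 0 < c := i₀.pos
  set s : Fin c → ℕ := fun k => ∑ i, a i k with hs
  have hssum : ∑ k, s k = c * N := by
    rw [hs, Finset.sum_comm]
    simp [hrow, Finset.sum_const, Finset.card_univ]
  have hCS : c * N ^ 2 ≤ ∑ k, s k ^ 2 := by
    have := sq_sum_le_card_mul_sum_sq (s := (univ : Finset (Fin c))) (f := s)
    rw [hssum, Finset.card_univ, Fintype.card_fin] at this
    have h2 : c * (c * N ^ 2) ≤ c * ∑ k, s k ^ 2 := by
      calc c * (c * N ^ 2) = (c * N) ^ 2 := by ring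
        _ ≤ _ := this
    exact Nat.le_of_mul_le_mul_left h2 hc0
  have hrowsq : ∀ i, ∑ k, a i k ^ 2 ≤ N ^ 2 := by
    intro i
    calc ∑ k, a i k ^ 2 ≤ ∑ k, a i k * N := by
          refine Finset.sum_le_sum fun k _ => ?_
          rw [sq]
          exact Nat.mul_le_mul_left _ (hrow i ▸
            Finset.single_le_sum (fun _ _ => Nat.zero_le _) (mem_univ k))
      _ = N ^ 2 := by rw [← Finset.sum_mul, hrow, sq]
  have hdiag : ∑ i, ∑ k, a i k ^ 2 + 2 * (N - 1) ≤ c * N ^ 2 := by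
    rw [← Finset.add_sum_erase _ _ (mem_univ i₀)]
    have hi₀ : ∑ k, a i₀ k ^ 2 + 2 * (N - 1) ≤ N ^ 2 :=
      row_sq_bound (a i₀) (hrow i₀) hk h1 h2
    have hrest : ∑ i ∈ univ.erase i₀, ∑ k, a i k ^ 2 ≤ (c - 1) * N ^ 2 := by
      calc ∑ i ∈ univ.erase i₀, ∑ k, a i k ^ 2 ≤ ∑ _i ∈ univ.erase i₀, N ^ 2 :=
            Finset.sum_le_sum fun i _ => hrowsq i
        _ = (c - 1) * N ^ 2 := by
            rw [Finset.sum_const, Finset.card_erase_of_mem (mem_univ _), Finset.card_univ,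
              Fintype.card_fin, smul_eq_mul]
    have : N ^ 2 + (c - 1) * N ^ 2 = c * N ^ 2 := by
      have : 1 + (c - 1) = c := by omega
      calc N ^ 2 + (c - 1) * N ^ 2 = (1 + (c - 1)) * N ^ 2 := by ring
        _ = c * N ^ 2 := by rw [this]
    omega
  -- split product sum into diag + offDiag
  have hsplit : (∑ ij ∈ (univ : Finset (Fin c)).diag, ∑ k, a ij.1 k * a ij.2 k)
      + (∑ ij ∈ (univ : Finset (Fin c)).offDiag, ∑ k, a ij.1 k * a ij.2 k)
      = ∑ k, s k ^ 2 := by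
    rw [← Finset.sum_union (Finset.disjoint_diag_offDiag _), Finset.diag_union_offDiag]
    rw [Finset.sum_comm]
    refine Finset.sum_congr rfl fun k _ => ?_
    calc ∑ ij ∈ univ ×ˢ univ, a ij.1 k * a ij.2 k
        = ∑ i, ∑ j, a i k * a j k := Finset.sum_product _ _ _
      _ = s k * s k := (Finset.sum_mul_sum _ _ _ _).symm
      _ = s k ^ 2 := (sq (s k)).symm
  have hdiagval : ∑ ij ∈ (univ : Finset (Fin c)).diag, ∑ k, a ij.1 k * a ij.2 k
      = ∑ i, ∑ k, a i k ^ 2 := by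
    have himg : (univ : Finset (Fin c)).diag = univ.image fun i => (i, i) := by
      ext x
      simp only [Finset.mem_diag, Finset.mem_image, mem_univ, true_and]
      constructor
      · intro h
        exact ⟨x.1, by obtain ⟨x1, x2⟩ := x; cases h; rfl⟩
      · rintro ⟨i, rfl⟩; rfl
    rw [himg, Finset.sum_image (by intro x _ y _ h; exact (Prod.mk.injEq _ _ _ _ ▸ h).1)]
    simp [sq]
  omega

/-- Every optimal `c`-coloring `χ*` of the extended graph `G'` (for `c > 2`
and `n ≥ 2`) properly colors every edge of `E' \ E` (i.e. every edge with an
endpoint outside `V`); moreover there is a permutation `π` of the colors such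
that every vertex of `X_i` gets color `π i` and every vertex of `V` gets
color `π 0` or `π 1` (`0`-based; these are the colors `π(1)`, `π(2)`). -/
theorem optimal_coloring_structure_extGraph
    {V : Type*} [Fintype V] [DecidableEq V] (G : SimpleGraph V)
    (c : ℕ) (hc : 2 < c) (hn : 2 ≤ Fintype.card V)
    (χstar : V ⊕ (Fin c × Fin (Fintype.card V ^ 2)) → Fin c)
    (hopt : ∀ ρ : V ⊕ (Fin c × Fin (Fintype.card V ^ 2)) → Fin c,
      (properEdges (extGraph G c) ρ).card ≤ (properEdges (extGraph G c) χstar).card) :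
    (∀ a b, (extGraph G c).Adj a b → (a.isRight ∨ b.isRight) → χstar a ≠ χstar b) ∧
    (∃ π : Equiv.Perm (Fin c),
      (∀ (i : Fin c) (x : Fin (Fintype.card V ^ 2)), χstar (Sum.inr (i, x)) = π i) ∧
      (∀ v : V, χstar (Sum.inl v) = π ⟨0, by omega⟩ ∨ χstar (Sum.inl v) = π ⟨1, by omega⟩)) := by
  classical
  haveI : NeZero c := ⟨by omega⟩
  haveI : Nonempty V := Fintype.card_pos_iff.mp (by omega)
  have hN2 : 2 ≤ Fintype.card V ^ 2 := by nlinarith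
  have hnn : Fintype.card V * Fintype.card V = Fintype.card V ^ 2 := by ring
  set Gc := extGraph G c with hGc
  -- adjacency facts
  have adj_rr : ∀ (i j : Fin c) (x y : Fin (Fintype.card V ^ 2)), i ≠ j →
      Gc.Adj (Sum.inr (i, x)) (Sum.inr (j, y)) := by
    intro i j x y hij
    rw [hGc]
    simp only [extGraph, SimpleGraph.fromRel_adj]
    exact ⟨by simp [hij], Or.inl hij⟩
  have adj_rr' : ∀ (i j : Fin c) (x y : Fin (Fintype.card V ^ 2)),
      Gc.Adj (Sum.inr (i, x)) (Sum.inr (j, y)) → i ≠ j := by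
    intro i j x y h
    rw [hGc] at h
    simp only [extGraph, SimpleGraph.fromRel_adj] at h
    rcases h with ⟨-, h | h⟩
    · exact h
    · exact h.symm
  have adj_lr : ∀ (u : V) (i : Fin c) (x : Fin (Fintype.card V ^ 2)), 2 ≤ (i : ℕ) →
      Gc.Adj (Sum.inl u) (Sum.inr (i, x)) := by
    intro u i x hi
    rw [hGc]
    simp only [extGraph, SimpleGraph.fromRel_adj]
    exact ⟨by simp, Or.inl hi⟩
  have adj_lr' : ∀ (u : V) (i : Fin c) (x : Fin (Fintype.card V ^ 2)),
      Gc.Adj (Sum.inl u) (Sum.inr (i, x)) → 2 ≤ (i : ℕ) := by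
    intro u i x h
    rw [hGc] at h
    simp only [extGraph, SimpleGraph.fromRel_adj] at h
    rcases h with ⟨-, h | h⟩
    · exact h
    · exact h.elim
  have adj_rl' : ∀ (u : V) (i : Fin c) (x : Fin (Fintype.card V ^ 2)),
      Gc.Adj (Sum.inr (i, x)) (Sum.inl u) → 2 ≤ (i : ℕ) :=
    fun u i x h => adj_lr' u i x h.symm
  -- counting improper ordered pairs
  have hPQ : ∀ χ : V ⊕ (Fin c × Fin (Fintype.card V ^ 2)) → Fin c,
      (univ.filter fun p : (V ⊕ (Fin c × Fin (Fintype.card V ^ 2))) ×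
          (V ⊕ (Fin c × Fin (Fintype.card V ^ 2))) =>
          Gc.Adj p.1 p.2 ∧ χ p.1 = χ p.2).card
        + 2 * (properEdges Gc χ).card
      = (univ.filter fun p : (V ⊕ (Fin c × Fin (Fintype.card V ^ 2))) ×
          (V ⊕ (Fin c × Fin (Fintype.card V ^ 2))) => Gc.Adj p.1 p.2).card := by
    intro χ
    rw [← pairs_card_eq_two_mul_properEdges Gc χ]
    exact card_filter_split _ _
  -- the baseline coloring
  set ρ : V ⊕ (Fin c × Fin (Fintype.card V ^ 2)) → Fin c :=
    Sum.elim (fun _ => (0 : Fin c)) (fun w => w.1) with hρ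
  have hQρ : (univ.filter fun p : (V ⊕ (Fin c × Fin (Fintype.card V ^ 2))) ×
        (V ⊕ (Fin c × Fin (Fintype.card V ^ 2))) =>
        Gc.Adj p.1 p.2 ∧ ρ p.1 = ρ p.2).card
      ≤ Fintype.card V * Fintype.card V - Fintype.card V := by
    have hsub : ∀ p ∈ (univ.filter fun p : (V ⊕ (Fin c × Fin (Fintype.card V ^ 2))) ×
        (V ⊕ (Fin c × Fin (Fintype.card V ^ 2))) =>
        Gc.Adj p.1 p.2 ∧ ρ p.1 = ρ p.2),
        ∃ u v : V, p = (Sum.inl u, Sum.inl v) ∧ u ≠ v := by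
      intro p hp
      rw [Finset.mem_filter] at hp
      obtain ⟨-, hadjp, hcol⟩ := hp
      obtain ⟨a, b⟩ := p
      rcases a with u | ⟨i, x⟩ <;> rcases b with v | ⟨j, y⟩
      · refine ⟨u, v, rfl, fun h => hadjp.ne (by rw [h])⟩
      · exfalso
        have hj := adj_lr' u j y hadjp
        have : ((0 : Fin c) : ℕ) = (j : ℕ) := by
          have := congrArg Fin.val (by simpa [hρ] using hcol)
          simpa using this
        simp at this
        omega
      · exfalso
        have hi := adj_rl' v i x hadjp
        have : ((i : Fin c) : ℕ) = ((0 : Fin c) : ℕ) := by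
          have := congrArg Fin.val (by simpa [hρ] using hcol)
          simpa using this
        simp at this
        simp [this] at hi
      · exact absurd (by simpa [hρ] using hcol) (adj_rr' i j x y hadjp)
    calc (univ.filter fun p : (V ⊕ (Fin c × Fin (Fintype.card V ^ 2))) ×
        (V ⊕ (Fin c × Fin (Fintype.card V ^ 2))) =>
        Gc.Adj p.1 p.2 ∧ ρ p.1 = ρ p.2).card
        ≤ ((univ : Finset V).offDiag).card := by
          refine Finset.card_le_card_of_injOn
            (fun p => (Sum.elim id (fun _ => Classical.arbitrary V) p.1,
                       Sum.elim id (fun _ => Classical.arbitrary V) p.2)) ?_ ?_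
          · intro p hp
            obtain ⟨u, v, rfl, huv⟩ := hsub p hp
            exact Finset.mem_offDiag.mpr ⟨mem_univ _, mem_univ _, huv⟩
          · intro p hp q hq h
            obtain ⟨u, v, rfl, -⟩ := hsub p hp
            obtain ⟨u', v', rfl, -⟩ := hsub q hq
            simp only [Sum.elim_inl, id_eq, Prod.mk.injEq] at h
            rw [h.1, h.2]
      _ = Fintype.card V * Fintype.card V - Fintype.card V := by
          rw [Finset.offDiag_card, Finset.card_univ]
  have hQstar : (univ.filter fun p : (V ⊕ (Fin c × Fin (Fintype.card V ^ 2))) ×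
        (V ⊕ (Fin c × Fin (Fintype.card V ^ 2))) =>
        Gc.Adj p.1 p.2 ∧ χstar p.1 = χstar p.2).card
      ≤ Fintype.card V * Fintype.card V - Fintype.card V := by
    have h1 := hPQ χstar
    have h2 := hPQ ρ
    have h3 := hopt ρ
    linarith
  -- every part X_i is monochromatic
  have hmono : ∀ (i : Fin c) (x y : Fin (Fintype.card V ^ 2)),
      χstar (Sum.inr (i, x)) = χstar (Sum.inr (i, y)) := by
    by_contra hcon
    push_neg at hcon
    obtain ⟨i₀, x₀, y₀, hxy⟩ := hcon
    set a : Fin c → Fin c → ℕ := fun i k =>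
      (univ.filter fun w : Fin c × Fin (Fintype.card V ^ 2) =>
        w.1 = i ∧ χstar (Sum.inr w) = k).card with ha
    have hrow : ∀ i, ∑ k, a i k = Fintype.card V ^ 2 := by
      intro i
      have hcard : (univ.filter fun w : Fin c × Fin (Fintype.card V ^ 2) => w.1 = i).card
          = Fintype.card V ^ 2 := by
        have hset : (univ.filter fun w : Fin c × Fin (Fintype.card V ^ 2) => w.1 = i)
            = {i} ×ˢ univ := by
          ext ⟨j, x⟩
          simp only [Finset.mem_filter, Finset.mem_product, Finset.mem_singleton,
            mem_univ, true_and, and_true]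
        rw [hset, Finset.card_product]
        simp
      have hfib := Finset.card_eq_sum_card_fiberwise
        (s := univ.filter fun w : Fin c × Fin (Fintype.card V ^ 2) => w.1 = i)
        (t := univ) (f := fun w => χstar (Sum.inr w)) (fun _ _ => mem_univ _)
      rw [hcard] at hfib
      rw [hfib]
      refine Finset.sum_congr rfl fun k _ => ?_
      rw [Finset.filter_filter]
    have h1 : 1 ≤ a i₀ (χstar (Sum.inr (i₀, x₀))) :=
      Finset.card_pos.mpr ⟨(i₀, x₀), Finset.mem_filter.mpr ⟨mem_univ _, rfl, rfl⟩⟩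
    have h2 : 1 ≤ a i₀ (χstar (Sum.inr (i₀, y₀))) :=
      Finset.card_pos.mpr ⟨(i₀, y₀), Finset.mem_filter.mpr ⟨mem_univ _, rfl, rfl⟩⟩
    have halg := alg_bound a hrow hxy h1 h2
    have hWQ : ∑ ij ∈ (univ : Finset (Fin c)).offDiag, ∑ k, a ij.1 k * a ij.2 k
        ≤ (univ.filter fun p : (V ⊕ (Fin c × Fin (Fintype.card V ^ 2))) ×
            (V ⊕ (Fin c × Fin (Fintype.card V ^ 2))) =>
            Gc.Adj p.1 p.2 ∧ χstar p.1 = χstar p.2).card := by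
      have hcardW : (univ.filter fun pq : (Fin c × Fin (Fintype.card V ^ 2)) ×
            (Fin c × Fin (Fintype.card V ^ 2)) =>
            pq.1.1 ≠ pq.2.1 ∧ χstar (Sum.inr pq.1) = χstar (Sum.inr pq.2)).card
          = ∑ ij ∈ (univ : Finset (Fin c)).offDiag, ∑ k, a ij.1 k * a ij.2 k := by
        rw [Finset.card_eq_sum_card_fiberwise
          (f := fun pq : (Fin c × Fin (Fintype.card V ^ 2)) ×
            (Fin c × Fin (Fintype.card V ^ 2)) => (pq.1.1, pq.2.1))
          (t := (univ : Finset (Fin c)).offDiag)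
          (fun pq hpq => Finset.mem_offDiag.mpr
            ⟨mem_univ _, mem_univ _, (Finset.mem_filter.mp hpq).2.1⟩)]
        refine Finset.sum_congr rfl fun ij hij => ?_
        obtain ⟨-, -, hijne⟩ := Finset.mem_offDiag.mp hij
        rw [Finset.filter_filter]
        rw [Finset.card_eq_sum_card_fiberwise
          (f := fun pq : (Fin c × Fin (Fintype.card V ^ 2)) ×
            (Fin c × Fin (Fintype.card V ^ 2)) => χstar (Sum.inr pq.1))
          (t := (univ : Finset (Fin c))) (fun _ _ => mem_univ _)]
        refine Finset.sum_congr rfl fun k _ => ?_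
        rw [Finset.filter_filter]
        have hset : (univ.filter fun pq : (Fin c × Fin (Fintype.card V ^ 2)) ×
              (Fin c × Fin (Fintype.card V ^ 2)) =>
              ((pq.1.1 ≠ pq.2.1 ∧ χstar (Sum.inr pq.1) = χstar (Sum.inr pq.2)) ∧
                (pq.1.1, pq.2.1) = ij) ∧ χstar (Sum.inr pq.1) = k)
            = (univ.filter fun w : Fin c × Fin (Fintype.card V ^ 2) =>
                w.1 = ij.1 ∧ χstar (Sum.inr w) = k) ×ˢ
              (univ.filter fun w : Fin c × Fin (Fintype.card V ^ 2) =>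
                w.1 = ij.2 ∧ χstar (Sum.inr w) = k) := by
          ext ⟨w1, w2⟩
          constructor
          · intro hmem
            simp only [Finset.mem_filter, mem_univ, true_and] at hmem
            obtain ⟨⟨⟨hne, hcol⟩, hij2⟩, hk⟩ := hmem
            have h1 : w1.1 = ij.1 := by rw [← hij2]
            have h2 : w2.1 = ij.2 := by rw [← hij2]
            simp only [Finset.mem_product, Finset.mem_filter, mem_univ, true_and]
            exact ⟨⟨h1, hk⟩, h2, by rw [← hcol]; exact hk⟩
          · intro hmem
            simp only [Finset.mem_product, Finset.mem_filter, mem_univ, true_and] at hmem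
            obtain ⟨⟨h1, hk1⟩, h2, hk2⟩ := hmem
            simp only [Finset.mem_filter, mem_univ, true_and]
            refine ⟨⟨⟨?_, ?_⟩, ?_⟩, hk1⟩
            · rw [h1, h2]; exact hijne
            · rw [hk1, hk2]
            · rw [h1, h2]
        rw [hset, Finset.card_product]
      rw [← hcardW]
      refine Finset.card_le_card_of_injOn
        (fun pq => (Sum.inr pq.1, Sum.inr pq.2)) ?_ ?_
      · intro pq hpq
        obtain ⟨-, hne, hcol⟩ := Finset.mem_filter.mp hpq
        exact Finset.mem_filter.mpr
          ⟨mem_univ _, adj_rr pq.1.1 pq.2.1 pq.1.2 pq.2.2 hne, hcol⟩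
      · intro p hp q hq h
        simp only [Prod.mk.injEq, Sum.inr.injEq] at h
        exact Prod.ext h.1 h.2

    have hfin := le_trans halg (le_trans hWQ hQstar)
    have hsub : (Fintype.card V * Fintype.card V - Fintype.card V) + Fintype.card V
        = Fintype.card V * Fintype.card V :=
      Nat.sub_add_cancel (Nat.le_mul_of_pos_left _ (by omega))
    have hM1 : (Fintype.card V ^ 2 - 1) + 1 = Fintype.card V ^ 2 := by omega
    linarith
  -- the coloring of the parts
  have hx0 : 0 < Fintype.card V ^ 2 := by omega
  set d : Fin c → Fin c := fun i => χstar (Sum.inr (i, ⟨0, hx0⟩)) with hd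
  have hdall : ∀ (i : Fin c) (x : Fin (Fintype.card V ^ 2)),
      χstar (Sum.inr (i, x)) = d i := fun i x => hmono i x ⟨0, hx0⟩
  have hdinj : Function.Injective d := by
    intro i j hij
    by_contra hne
    have hle : ((univ : Finset (Fin (Fintype.card V ^ 2) × Fin (Fintype.card V ^ 2)))).card
        ≤ (univ.filter fun p : (V ⊕ (Fin c × Fin (Fintype.card V ^ 2))) ×
            (V ⊕ (Fin c × Fin (Fintype.card V ^ 2))) =>
            Gc.Adj p.1 p.2 ∧ χstar p.1 = χstar p.2).card := by
      refine Finset.card_le_card_of_injOn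
        (fun xy : Fin (Fintype.card V ^ 2) × Fin (Fintype.card V ^ 2) =>
          ((Sum.inr (i, xy.1) : V ⊕ (Fin c × Fin (Fintype.card V ^ 2))),
           (Sum.inr (j, xy.2) : V ⊕ (Fin c × Fin (Fintype.card V ^ 2))))) ?_ ?_
      · rintro xy -
        refine Finset.mem_filter.mpr ⟨mem_univ _, adj_rr _ _ _ _ hne, ?_⟩
        rw [hdall, hdall, hij]
      · rintro p - q - h
        simp only [Prod.mk.injEq, Sum.inr.injEq] at h
        exact Prod.ext h.1.2 h.2.2
    rw [Finset.card_univ, Fintype.card_prod, Fintype.card_fin] at hle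
    have hb := le_trans hle hQstar
    have hsub : (Fintype.card V * Fintype.card V - Fintype.card V) + Fintype.card V
        = Fintype.card V * Fintype.card V :=
      Nat.sub_add_cancel (Nat.le_mul_of_pos_left _ (by omega))
    have hMT : Fintype.card V ^ 2 ≤ Fintype.card V ^ 2 * Fintype.card V ^ 2 :=
      Nat.le_mul_of_pos_left _ (by omega)
    linarith
  have hbV : ∀ (i : Fin c), 2 ≤ (i : ℕ) → ∀ v : V, χstar (Sum.inl v) ≠ d i := by
    intro i hi v hv
    have hle : ((univ : Finset (Fin (Fintype.card V ^ 2)))).card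
        ≤ (univ.filter fun p : (V ⊕ (Fin c × Fin (Fintype.card V ^ 2))) ×
            (V ⊕ (Fin c × Fin (Fintype.card V ^ 2))) =>
            Gc.Adj p.1 p.2 ∧ χstar p.1 = χstar p.2).card := by
      refine Finset.card_le_card_of_injOn
        (fun x : Fin (Fintype.card V ^ 2) =>
          ((Sum.inl v : V ⊕ (Fin c × Fin (Fintype.card V ^ 2))),
           (Sum.inr (i, x) : V ⊕ (Fin c × Fin (Fintype.card V ^ 2))))) ?_ ?_
      · rintro x -
        refine Finset.mem_filter.mpr ⟨mem_univ _, adj_lr v i x hi, ?_⟩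
        rw [hdall, hv]
      · rintro p - q - h
        simp only [Prod.mk.injEq, Sum.inr.injEq] at h
        exact h.2.2
    rw [Finset.card_univ, Fintype.card_fin] at hle
    have hb := le_trans hle hQstar
    have hsub : (Fintype.card V * Fintype.card V - Fintype.card V) + Fintype.card V
        = Fintype.card V * Fintype.card V :=
      Nat.sub_add_cancel (Nat.le_mul_of_pos_left _ (by omega))
    linarith
  have hdbij : Function.Bijective d := Finite.injective_iff_bijective.mp hdinj
  refine ⟨?_, ⟨Equiv.ofBijective d hdbij, fun i x => hdall i x, ?_⟩⟩
  · intro A B hAdj hR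
    rcases A with u | ⟨i, x⟩ <;> rcases B with v | ⟨j, y⟩
    · simp at hR
    · intro he
      exact hbV j (adj_lr' u j y hAdj) u (he.trans (hdall j y))
    · intro he
      exact hbV i (adj_rl' v i x hAdj) v (he.symm.trans (hdall i x))
    · intro he
      refine adj_rr' i j x y hAdj (hdinj ?_)
      rw [← hdall i x, ← hdall j y, he]
  · intro v
    obtain ⟨i, hi⟩ := hdbij.surjective (χstar (Sum.inl v))
    by_cases h2i : 2 ≤ (i : ℕ)
    · exact absurd hi.symm (hbV i h2i v)
    · have hi01 : (i : ℕ) = 0 ∨ (i : ℕ) = 1 := by omega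
      rcases hi01 with h | h
      · left
        rw [← hi]
        have : i = ⟨0, by omega⟩ := Fin.ext h
        rw [this]
        rfl
      · right
        rw [← hi]
        have : i = ⟨1, by omega⟩ := Fin.ext h
        rw [this]
        rfl
end

section
/- Let G=(V,E) be a finite simple graph with n := |V|, m := |E|, and let k be a positive integer with k ≤ n. Let G'=(V',E') be any graph obtained from G as follows: add two disjoint new vertex sets X and Y with |X| = |Y| = n³ and a new vertex v*; add edges so that v* is adjacent to every vertex of V and to exactly n − k + 1 vertices of X; every vertex of X is adjacent to every vertex of Y; and each vertex v ∈ V is adjacent to exactly |N_G(v)| vertices of X; no further edges besides these and the edges E of G are present. Let A := V ∪ Y and B := X ∪ {v*}. Then: (i) |E'(A,B)| = n⁶ + n + 2m; (ii) if G has an independent set S of size k, then the partition (A'',B'') with A'' := (A\S) ∪ {v*} and B'' := (B ∪ S)\{v*} satisfies |E'(A'',B'')| = |E'(A,B)| + 1 and has flip distance k+1 from (A,B); and (iii) if some partition of V' has strictly more cut edges in G' than (A,B), then G has an independent set of size at least k. -/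
open Finset

/-- The vertices of the graph `G'` of the reduction from `Independent Set`
to (permissive) `LS Max Cut`: the original vertices, the sets `X` and `Y`
(of `N = n³` vertices each), and the vertex `v*`. -/
inductive ISVert (V : Type*) (N : ℕ) where
  | orig : V → ISVert V N
  | x : Fin N → ISVert V N
  | y : Fin N → ISVert V N
  | star : ISVert V N

/-- The cut of the partition `(X,Y)` in the graph `H`: the set of edges of
`H` with one endpoint in `X` and one endpoint in `Y`. -/
def cutSet {W : Type*} (H : SimpleGraph W) (X Y : Set W) : Set (Sym2 W) :=
  {e ∈ H.edgeSet | (∃ x ∈ e, x ∈ X) ∧ (∃ y ∈ e, y ∈ Y)}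

open scoped Classical

def isVertEquiv (V : Type*) (N : ℕ) : (V ⊕ (Fin N ⊕ (Fin N ⊕ Unit))) ≃ ISVert V N where
  toFun w := match w with
    | .inl v => .orig v
    | .inr (.inl i) => .x i
    | .inr (.inr (.inl i)) => .y i
    | .inr (.inr (.inr _)) => .star
  invFun w := match w with
    | .orig v => .inl v
    | .x i => .inr (.inl i)
    | .y i => .inr (.inr (.inl i))
    | .star => .inr (.inr (.inr ()))
  left_inv w := by rcases w with v | i | i | u <;> rfl
  right_inv w := by cases w <;> rfl

instance (V : Type*) (N : ℕ) [Fintype V] : Fintype (ISVert V N) :=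
  Fintype.ofEquiv _ (isVertEquiv V N)

lemma ISVert.sum_cases {V : Type*} [Fintype V] {N : ℕ} {M : Type*} [AddCommMonoid M]
    (f : ISVert V N → M) :
    ∑ w, f w = (∑ v, f (.orig v)) + (∑ i, f (.x i)) + (∑ i, f (.y i)) + f .star := by
  rw [← Equiv.sum_comp (isVertEquiv V N) f]
  simp [isVertEquiv, Fintype.sum_sum_type, add_assoc]

lemma cutSet_comm {W : Type*} (H : SimpleGraph W) (P Q : Set W) :
    cutSet H P Q = cutSet H Q P := by
  ext e; simp only [cutSet, Set.mem_setOf_eq]; tauto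

lemma set_ncard_eq_sum {α : Type*} [Fintype α] (P : α → Prop) :
    {a | P a}.ncard = ∑ a, if P a then 1 else 0 := by
  rw [show {a | P a} = ↑(Finset.univ.filter P) by ext; simp]
  rw [Set.ncard_coe_finset, Finset.card_filter]

lemma cutSet_ncard_eq {W : Type*} [Fintype W] (H : SimpleGraph W) (P Q : Set W)
    (hdis : Disjoint P Q) :
    (cutSet H P Q).ncard = ∑ u, ∑ v, if u ∈ P ∧ v ∈ Q ∧ H.Adj u v then 1 else 0 := by
  have himg : cutSet H P Q =
      (fun p : W × W => Sym2.mk p.1 p.2) '' {p : W × W | p.1 ∈ P ∧ p.2 ∈ Q ∧ H.Adj p.1 p.2} := by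
    ext e
    constructor
    · rintro ⟨he, ⟨a, hae, haP⟩, ⟨b, hbe, hbQ⟩⟩
      induction e with
      | _ u v =>
        rw [Sym2.mem_iff] at hae hbe
        have hne : a ≠ b := fun h => Set.disjoint_left.mp hdis haP (h ▸ hbQ)
        have hadj : H.Adj u v := he
        rcases hae with rfl | rfl <;> rcases hbe with rfl | rfl
        · exact absurd rfl hne
        · exact ⟨(a, b), ⟨haP, hbQ, hadj⟩, rfl⟩
        · exact ⟨(a, b), ⟨haP, hbQ, hadj.symm⟩, Sym2.eq_swap⟩
        · exact absurd rfl hne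
    · rintro ⟨⟨a, b⟩, ⟨haP, hbQ, hadj⟩, rfl⟩
      exact ⟨hadj, ⟨a, Sym2.mem_mk_left a b, haP⟩, ⟨b, Sym2.mem_mk_right a b, hbQ⟩⟩
  have hinj : Set.InjOn (fun p : W × W => Sym2.mk p.1 p.2) {p : W × W | p.1 ∈ P ∧ p.2 ∈ Q ∧ H.Adj p.1 p.2} := by
    rintro ⟨a, b⟩ ⟨haP, hbQ, _⟩ ⟨c, d⟩ ⟨hcP, hdQ, _⟩ h
    change s((a, b).1, (a, b).2) = s((c, d).1, (c, d).2) at h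
    rw [Sym2.mk_eq_mk_iff] at h
    rcases h with h | h
    · exact h
    · simp only [Prod.swap_prod_mk, Prod.mk.injEq] at h
      exact absurd hcP (Set.disjoint_right.mp hdis (h.2 ▸ hbQ))
  rw [himg, Set.ncard_image_of_injOn hinj,
    show {p : W × W | p.1 ∈ P ∧ p.2 ∈ Q ∧ H.Adj p.1 p.2} =
      ↑(Finset.univ.filter fun p : W × W => p.1 ∈ P ∧ p.2 ∈ Q ∧ H.Adj p.1 p.2) by ext; simp]
  rw [Set.ncard_coe_finset, Finset.card_filter, Fintype.sum_prod_type]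

lemma exists_indep {V : Type*} [DecidableEq V] (G : SimpleGraph V) [DecidableRel G.Adj] (U : Finset V) :
    ∃ S ⊆ U, (∀ u ∈ S, ∀ v ∈ S, ¬ G.Adj u v) ∧
      U.card ≤ S.card + ∑ u ∈ U, ∑ v ∈ U, if G.Adj u v then 1 else 0 := by
  induction U using Finset.strongInduction with
  | _ U ih =>
    by_cases hI : ∀ u ∈ U, ∀ v ∈ U, ¬ G.Adj u v
    · exact ⟨U, Finset.Subset.refl U, hI, Nat.le_add_right _ _⟩
    · push_neg at hI
      obtain ⟨u, hu, v, hv, hadj⟩ := hI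
      obtain ⟨S, hSsub, hSind, hScard⟩ := ih (U.erase u) (Finset.erase_ssubset hu)
      refine ⟨S, hSsub.trans (Finset.erase_subset u U), hSind, ?_⟩
      have h1 : (∑ a ∈ U.erase u, ∑ b ∈ U.erase u, if G.Adj a b then 1 else 0) + 1 ≤
          ∑ a ∈ U, ∑ b ∈ U, if G.Adj a b then 1 else 0 := by
        have hrow : ∀ a ∈ U.erase u, (∑ b ∈ U.erase u, if G.Adj a b then 1 else 0) ≤
            ∑ b ∈ U, if G.Adj a b then 1 else 0 := fun a _ =>
          Finset.sum_le_sum_of_subset (Finset.erase_subset u U)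
        calc (∑ a ∈ U.erase u, ∑ b ∈ U.erase u, if G.Adj a b then 1 else 0) + 1
            ≤ (∑ a ∈ U.erase u, ∑ b ∈ U, if G.Adj a b then 1 else 0) + 1 :=
              Nat.add_le_add_right (Finset.sum_le_sum hrow) 1
          _ ≤ (∑ a ∈ U.erase u, ∑ b ∈ U, if G.Adj a b then 1 else 0) +
              (∑ b ∈ U, if G.Adj u b then 1 else 0) := by
              refine Nat.add_le_add_left ?_ _
              calc 1 = if G.Adj u v then 1 else 0 := by rw [if_pos hadj]
                _ ≤ ∑ b ∈ U, if G.Adj u b then 1 else 0 :=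
                  Finset.single_le_sum (f := fun b => if G.Adj u b then 1 else 0)
                    (fun b _ => Nat.zero_le _) hv
          _ = ∑ a ∈ U, ∑ b ∈ U, if G.Adj a b then 1 else 0 :=
              Finset.sum_erase_add U _ hu
      have := Finset.card_erase_add_one hu
      omega

lemma ab_bound (A C B D N : ℕ) (hAC : A + C = N) (hBD : B + D = N)
    (h : ¬((C = 0 ∧ B = 0) ∨ (A = 0 ∧ D = 0))) : A*D + B*C + N ≤ N*N := by
  push_neg at h
  have key : A + C ≤ A*B + C*D := by
    by_cases hB : B = 0
    · have hC : C ≠ 0 := fun hC => (h.1 hC) hB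
      have hD : D = N := by omega
      have : A + C ≤ C * D := by
        have : 1 ≤ C := Nat.one_le_iff_ne_zero.mpr hC
        calc A + C = N := hAC
          _ = 1 * D := by omega
          _ ≤ C * D := Nat.mul_le_mul_right _ this
      omega
    · by_cases hD : D = 0
      · have hA : A ≠ 0 := fun hA => (h.2 hA) hD
        have : A + C ≤ A * B := by
          have h1 : 1 ≤ A := Nat.one_le_iff_ne_zero.mpr hA
          calc A + C = N := hAC
            _ = B := by omega
            _ = 1 * B := (one_mul B).symm
            _ ≤ A * B := Nat.mul_le_mul_right _ h1
        omega
      · have h1 : 1 ≤ B := Nat.one_le_iff_ne_zero.mpr hB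
        have h2 : 1 ≤ D := Nat.one_le_iff_ne_zero.mpr hD
        have : A ≤ A * B := Nat.le_mul_of_pos_right A h1
        have : C ≤ C * D := Nat.le_mul_of_pos_right C h2
        omega
  calc A*D + B*C + N = A*D + B*C + (A + C) := by rw [hAC]
    _ ≤ A*D + B*C + (A*B + C*D) := Nat.add_le_add_left key _
    _ = (A+C)*(B+D) := by ring
    _ = N*N := by rw [hAC, hBD]

lemma cut_expand {V : Type*} [Fintype V] {N : ℕ} (G' : SimpleGraph (ISVert V N))
    (h6 : ∀ a b, ¬ G'.Adj (.x a) (.x b))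
    (h7 : ∀ a b, ¬ G'.Adj (.y a) (.y b))
    (h8 : ∀ v b, ¬ G'.Adj (.orig v) (.y b))
    (h9 : ∀ b, ¬ G'.Adj .star (.y b))
    (P : Set (ISVert V N)) :
    (cutSet G' P Pᶜ).ncard =
      (∑ u : V, ∑ v : V, if ISVert.orig u ∈ P ∧ ISVert.orig v ∉ P ∧ G'.Adj (.orig u) (.orig v) then 1 else 0)
    + (∑ v : V, ∑ i : Fin N, if ISVert.orig v ∈ P ∧ ISVert.x i ∉ P ∧ G'.Adj (.orig v) (.x i) then 1 else 0)
    + (∑ v : V, if ISVert.orig v ∈ P ∧ ISVert.star ∉ P ∧ G'.Adj (.orig v) .star then 1 else 0)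
    + (∑ i : Fin N, ∑ v : V, if ISVert.x i ∈ P ∧ ISVert.orig v ∉ P ∧ G'.Adj (.x i) (.orig v) then 1 else 0)
    + (∑ i : Fin N, ∑ j : Fin N, if ISVert.x i ∈ P ∧ ISVert.y j ∉ P ∧ G'.Adj (.x i) (.y j) then 1 else 0)
    + (∑ i : Fin N, if ISVert.x i ∈ P ∧ ISVert.star ∉ P ∧ G'.Adj (.x i) .star then 1 else 0)
    + (∑ j : Fin N, ∑ i : Fin N, if ISVert.y j ∈ P ∧ ISVert.x i ∉ P ∧ G'.Adj (.y j) (.x i) then 1 else 0)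
    + (∑ v : V, if ISVert.star ∈ P ∧ ISVert.orig v ∉ P ∧ G'.Adj .star (.orig v) then 1 else 0)
    + (∑ i : Fin N, if ISVert.star ∈ P ∧ ISVert.x i ∉ P ∧ G'.Adj .star (.x i) then 1 else 0) := by
  have h7' : ∀ b v, ¬ G'.Adj (.y b) (.orig v) := fun b v h => h8 v b h.symm
  have h9' : ∀ b, ¬ G'.Adj (.y b) .star := fun b h => h9 b h.symm
  rw [cutSet_ncard_eq G' P Pᶜ disjoint_compl_right]
  rw [ISVert.sum_cases]
  simp only [ISVert.sum_cases, Set.mem_compl_iff, h6, h7, h8, h9, h7', h9',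
    SimpleGraph.irrefl, and_false, false_and, if_false, Finset.sum_const_zero,
    add_zero, zero_add, Finset.sum_add_distrib]
  ring


set_option maxHeartbeats 1000000 in
/-- Reduction from `Independent Set` to (permissive) `LS Max Cut`:
`G'` is any graph on `V ∪ X ∪ Y ∪ {v*}` with `|X| = |Y| = n³` such that `v*`
is adjacent to all of `V` and to exactly `n - k + 1` vertices of `X`, every
vertex of `X` is adjacent to every vertex of `Y`, every `v ∈ V` is adjacent
to exactly `|N_G(v)|` vertices of `X`, and there are no further edges besides
these and the edges of `G`. With `A := V ∪ Y` and `B := X ∪ {v*}`: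
(i) `|E'(A,B)| = n⁶ + n + 2m`;
(ii) an independent set `S` of size `k` in `G` yields the partition
`(A'',B'')` with exactly one more cut edge and flip distance `k + 1`;
(iii) if some partition beats `(A,B)`, then `G` has an independent set of
size at least `k`. -/
theorem independent_set_reduction
    {V : Type*} [Fintype V] [DecidableEq V]
    (G : SimpleGraph V) [DecidableRel G.Adj]
    (k : ℕ) (hk : 1 ≤ k) (hkn : k ≤ Fintype.card V)
    (G' : SimpleGraph (ISVert V (Fintype.card V ^ 3)))
    (h1 : ∀ u v, G'.Adj (.orig u) (.orig v) ↔ G.Adj u v)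
    (h2 : ∀ v, G'.Adj .star (.orig v))
    (h3 : {a : Fin (Fintype.card V ^ 3) | G'.Adj .star (.x a)}.ncard =
      Fintype.card V - k + 1)
    (h4 : ∀ a b, G'.Adj (.x a) (.y b))
    (h5 : ∀ v, {a : Fin (Fintype.card V ^ 3) | G'.Adj (.orig v) (.x a)}.ncard =
      (G.neighborFinset v).card)
    (h6 : ∀ a b, ¬ G'.Adj (.x a) (.x b))
    (h7 : ∀ a b, ¬ G'.Adj (.y a) (.y b))
    (h8 : ∀ v b, ¬ G'.Adj (.orig v) (.y b))
    (h9 : ∀ b, ¬ G'.Adj .star (.y b)) :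
    let A : Set (ISVert V (Fintype.card V ^ 3)) :=
      Set.range ISVert.orig ∪ Set.range ISVert.y
    let B : Set (ISVert V (Fintype.card V ^ 3)) :=
      Set.range ISVert.x ∪ {ISVert.star}
    -- (i)
    ((cutSet G' A B).ncard =
      Fintype.card V ^ 6 + Fintype.card V + 2 * G.edgeFinset.card) ∧
    -- (ii)
    (∀ S : Finset V, S.card = k → (∀ u ∈ S, ∀ v ∈ S, ¬ G.Adj u v) →
      (cutSet G' ((A \ (ISVert.orig '' ↑S)) ∪ {ISVert.star})
          ((B ∪ (ISVert.orig '' ↑S)) \ {ISVert.star})).ncard =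
        (cutSet G' A B).ncard + 1 ∧
      (symmDiff A ((A \ (ISVert.orig '' ↑S)) ∪ {ISVert.star})).ncard = k + 1) ∧
    -- (iii)
    ((∃ X' Y' : Set (ISVert V (Fintype.card V ^ 3)),
        Disjoint X' Y' ∧ X' ∪ Y' = Set.univ ∧
        (cutSet G' A B).ncard < (cutSet G' X' Y').ncard) →
      ∃ S : Finset V, k ≤ S.card ∧ ∀ u ∈ S, ∀ v ∈ S, ¬ G.Adj u v) := by
  classical
  intro A B
  have hA : A = Set.range ISVert.orig ∪ Set.range ISVert.y := rfl
  have hB : B = Set.range ISVert.x ∪ {ISVert.star} := rfl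
  have hinj : Function.Injective (ISVert.orig : V → ISVert V (Fintype.card V ^ 3)) := by
    intro a b h; injection h
  have h2' : ∀ v, G'.Adj (ISVert.orig v) ISVert.star := fun v => (h2 v).symm
  have h4' : ∀ b a, G'.Adj (ISVert.y b) (ISVert.x a) := fun b a => (h4 a b).symm
  have mAo : ∀ u : V, ISVert.orig u ∈ A := fun u => Or.inl ⟨u, rfl⟩
  have mAy : ∀ i, ISVert.y i ∈ A := fun i => Or.inr ⟨i, rfl⟩
  have mAx : ∀ i, ISVert.x i ∉ A := by
    intro i h
    rw [hA] at h
    rcases h with ⟨v, hv⟩ | ⟨j, hj⟩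
    · exact nomatch hv
    · exact nomatch hj
  have mAs : ISVert.star ∉ A := by
    intro h
    rw [hA] at h
    rcases h with ⟨v, hv⟩ | ⟨j, hj⟩
    · exact nomatch hv
    · exact nomatch hj
  have hBA : B = Aᶜ := by
    rw [hA, hB]; ext w
    cases w <;> simp
  have hdegG1 : ∀ u : V, (∑ v : V, if G.Adj u v then 1 else 0) = G.degree u := by
    intro u
    rw [← Finset.card_filter]
    have : Finset.univ.filter (fun v => G.Adj u v) = G.neighborFinset u := by
      ext v; simp
    rw [this]; rfl
  have hdegG2 : ∀ v : V, (∑ u : V, if G.Adj u v then 1 else 0) = G.degree v := by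
    intro v
    rw [← Finset.card_filter]
    have : Finset.univ.filter (fun u => G.Adj u v) = G.neighborFinset v := by
      ext u; simp [G.adj_comm]
    rw [this]; rfl
  have hdegG1' : ∀ u : V, (∑ v : V,
      if G'.Adj (ISVert.orig u) (ISVert.orig v) then 1 else 0) = G.degree u := by
    intro u
    rw [← hdegG1 u]
    refine Finset.sum_congr rfl fun v _ => ?_
    by_cases h : G.Adj u v
    · rw [if_pos ((h1 u v).mpr h), if_pos h]
    · rw [if_neg (fun hh => h ((h1 u v).mp hh)), if_neg h]
  have hdegG2' : ∀ v : V, (∑ u : V,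
      if G'.Adj (ISVert.orig u) (ISVert.orig v) then 1 else 0) = G.degree v := by
    intro v
    rw [← hdegG2 v]
    refine Finset.sum_congr rfl fun u _ => ?_
    by_cases h : G.Adj u v
    · rw [if_pos ((h1 u v).mpr h), if_pos h]
    · rw [if_neg (fun hh => h ((h1 u v).mp hh)), if_neg h]
  have hdeg : ∀ v, (∑ i : Fin (Fintype.card V ^ 3),
      if G'.Adj (ISVert.orig v) (ISVert.x i) then 1 else 0) = G.degree v := by
    intro v; rw [← set_ncard_eq_sum, h5]; rfl
  have hsx0 : (∑ i : Fin (Fintype.card V ^ 3),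
      if G'.Adj ISVert.star (ISVert.x i) then 1 else 0) = Fintype.card V - k + 1 := by
    rw [← set_ncard_eq_sum]; exact h3
  obtain ⟨d, hd⟩ : ∃ d, Fintype.card V = k + d := ⟨Fintype.card V - k, by omega⟩
  have hsub : Fintype.card V - k + 1 = d + 1 := by omega
  have key1 : (cutSet G' A B).ncard =
      Fintype.card V ^ 6 + Fintype.card V + 2 * G.edgeFinset.card := by
    rw [hBA, cut_expand G' h6 h7 h8 h9 A]
    simp only [mAo, mAy, mAx, mAs, h2', h4', not_true, not_false_eq_true, true_and, and_true,
      false_and, and_false, if_false, if_true, Finset.sum_const_zero, add_zero, zero_add,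
      Finset.sum_const, Finset.card_univ, Fintype.card_fin, smul_eq_mul, mul_one, hdeg]
    rw [SimpleGraph.sum_degrees_eq_twice_card_edges]
    ring
  refine ⟨key1, ?_, ?_⟩
  · intro S hScard hSind
    set P2 : Set (ISVert V (Fintype.card V ^ 3)) :=
      (A \ (ISVert.orig '' ↑S)) ∪ {ISVert.star} with hP2def
    have mP2o : ∀ u : V, ISVert.orig u ∈ P2 ↔ u ∉ S := by
      intro u
      rw [hP2def]
      constructor
      · rintro (⟨-, hne⟩ | habs)
        · exact fun hu => hne ⟨u, hu, rfl⟩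
        · exact absurd habs (by simp)
      · intro hu
        exact Or.inl ⟨mAo u, by rintro ⟨v, hv, hveq⟩; exact hu (hinj hveq ▸ hv)⟩
    have mP2x : ∀ i, ISVert.x i ∉ P2 := by
      intro i h
      rw [hP2def] at h
      rcases h with ⟨hxA, -⟩ | habs
      · exact mAx i hxA
      · exact absurd habs (by simp)
    have mP2y : ∀ i, ISVert.y i ∈ P2 := by
      intro i
      rw [hP2def]
      exact Or.inl ⟨mAy i, by rintro ⟨v, -, hveq⟩; exact nomatch hveq⟩
    have mP2s : ISVert.star ∈ P2 := by rw [hP2def]; exact Or.inr rfl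
    have hQ2 : (B ∪ ISVert.orig '' ↑S) \ {ISVert.star} = P2ᶜ := by
      rw [hP2def, hA, hB]
      ext w
      cases w <;> simp <;> tauto
    refine ⟨?_, ?_⟩
    · rw [key1, hQ2, cut_expand G' h6 h7 h8 h9 P2]
      simp only [mP2o, mP2x, mP2y, mP2s, h1, h2', h4', hsx0, not_true, not_false_eq_true, not_not,
        true_and, and_true, false_and, and_false, if_false, if_true, Finset.sum_const_zero,
        add_zero, zero_add, Finset.sum_const, Finset.card_univ, Fintype.card_fin, smul_eq_mul,
        mul_one]
      have e_oo : (∑ u : V, ∑ v : V, if u ∉ S ∧ v ∈ S ∧ G.Adj u v then 1 else 0)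
          = ∑ v : V, if v ∈ S then G.degree v else 0 := by
        have hiff : ∀ u v : V, (u ∉ S ∧ v ∈ S ∧ G.Adj u v) ↔ (v ∈ S ∧ G.Adj u v) := fun u v =>
          ⟨fun h => h.2, fun h => ⟨fun hu => hSind u hu v h.1 h.2, h⟩⟩
        calc (∑ u : V, ∑ v : V, if u ∉ S ∧ v ∈ S ∧ G.Adj u v then 1 else 0)
            = ∑ u : V, ∑ v : V, if v ∈ S ∧ G.Adj u v then 1 else 0 := by simp only [hiff]
          _ = ∑ v : V, ∑ u : V, if v ∈ S ∧ G.Adj u v then 1 else 0 := Finset.sum_comm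
          _ = ∑ v : V, if v ∈ S then G.degree v else 0 := Finset.sum_congr rfl fun v _ => by
              by_cases hv : v ∈ S <;> simp [hv, hdegG2 v]
      have e_ox : (∑ u : V, ∑ i : Fin (Fintype.card V ^ 3),
            if u ∉ S ∧ G'.Adj (ISVert.orig u) (ISVert.x i) then 1 else 0)
          = ∑ v : V, if v ∉ S then G.degree v else 0 :=
        Finset.sum_congr rfl fun v _ => by by_cases hv : v ∈ S <;> simp [hv, hdeg v]
      have e_so : (∑ u : V, if u ∈ S ∧ G'.Adj ISVert.star (ISVert.orig u) then 1 else 0) = k := by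
        simp only [h2, and_true]
        calc (∑ u : V, if u ∈ S then 1 else 0)
            = (Finset.univ.filter (fun u => u ∈ S)).card := (Finset.card_filter _ _).symm
          _ = S.card := by congr 1; ext v; simp
          _ = k := hScard
      have hsplitd : (∑ v : V, if v ∈ S then G.degree v else 0)
          + (∑ v : V, if v ∉ S then G.degree v else 0) = 2 * G.edgeFinset.card := by
        rw [← Finset.sum_add_distrib, ← SimpleGraph.sum_degrees_eq_twice_card_edges]
        exact Finset.sum_congr rfl fun v _ => by by_cases hv : v ∈ S <;> simp [hv]
      have hNN : (Fintype.card V ^ 3) * (Fintype.card V ^ 3) = Fintype.card V ^ 6 := by ring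
      rw [e_oo, e_ox, e_so, hNN, hsub]
      linarith [hsplitd, hd]
    · have hsd : symmDiff A P2 = (ISVert.orig '' ↑S) ∪ {ISVert.star} := by
        ext w
        rw [Set.mem_symmDiff]
        cases w with
        | orig u => simp [mAo u, mP2o u]
        | x i => simp [mAx i, mP2x i]
        | y i => simp [mAy i, mP2y i]
        | star => simp [mAs, mP2s]
      rw [hsd, Set.ncard_union_eq (by
        rw [Set.disjoint_singleton_right]
        rintro ⟨v, -, hveq⟩
        exact nomatch hveq)]
      rw [Set.ncard_singleton, Set.ncard_image_of_injective _ hinj, Set.ncard_coe_finset, hScard]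
  · rintro ⟨X', Y', hdisXY, hunivXY, hgt⟩
    have hY' : Y' = X'ᶜ := by
      ext w; simp only [Set.mem_compl_iff]
      constructor
      · intro hw hx; exact Set.disjoint_left.mp hdisXY hx hw
      · intro hw
        have hww : w ∈ X' ∪ Y' := by rw [hunivXY]; trivial
        rcases hww with h | h
        · exact absurd h hw
        · exact h
    rw [key1, hY'] at hgt
    by_cases hk1 : k = 1
    · have hne : Nonempty V := Fintype.card_pos_iff.mp (by omega)
      obtain ⟨v0⟩ := hne
      refine ⟨{v0}, by simp [hk1], ?_⟩
      intro u hu v hv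
      simp only [Finset.mem_singleton] at hu hv
      subst hu; subst hv
      exact G.irrefl
    have hn2 : 2 ≤ Fintype.card V := le_trans (by omega) hkn
    have step2 : ∀ P : Set (ISVert V (Fintype.card V ^ 3)),
        (∀ i, ISVert.x i ∉ P) → (∀ j, ISVert.y j ∈ P) →
        (Fintype.card V ^ 6 + Fintype.card V + 2 * G.edgeFinset.card <
          (cutSet G' P Pᶜ).ncard) →
        ∃ S : Finset V, k ≤ S.card ∧ ∀ u ∈ S, ∀ v ∈ S, ¬ G.Adj u v := by
      intro P hxP hyP hcut
      rw [cut_expand G' h6 h7 h8 h9 P] at hcut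
      simp only [hxP, hyP, h2, h2', h4', not_true, not_false_eq_true, true_and, and_true,
        false_and, and_false, if_false, if_true, Finset.sum_const_zero, add_zero, zero_add,
        Finset.sum_const, Finset.card_univ, Fintype.card_fin, smul_eq_mul, mul_one] at hcut
      have hrowP : ∀ v : V, (∑ i : Fin (Fintype.card V ^ 3),
          if ISVert.orig v ∈ P ∧ G'.Adj (ISVert.orig v) (ISVert.x i) then 1 else 0)
          = if ISVert.orig v ∈ P then G.degree v else 0 := fun v => by
        by_cases hv : ISVert.orig v ∈ P <;> simp [hv, hdeg v]
      simp only [hrowP] at hcut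
      have hNN : (Fintype.card V ^ 3) * (Fintype.card V ^ 3) = Fintype.card V ^ 6 := by ring
      rw [hNN] at hcut
      have hOOkey : (∑ u : V, ∑ v : V,
            if ISVert.orig u ∈ P ∧ ISVert.orig v ∉ P ∧
              G'.Adj (ISVert.orig u) (ISVert.orig v) then 1 else 0)
          + (∑ u : V, ∑ v : V,
            if ISVert.orig u ∉ P ∧ ISVert.orig v ∉ P ∧
              G'.Adj (ISVert.orig u) (ISVert.orig v) then 1 else 0)
          = ∑ v : V, if ISVert.orig v ∉ P then G.degree v else 0 := by
        have hrows : ∀ u : V,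
            (∑ v : V, if ISVert.orig u ∈ P ∧ ISVert.orig v ∉ P ∧
              G'.Adj (ISVert.orig u) (ISVert.orig v) then 1 else 0)
            + (∑ v : V, if ISVert.orig u ∉ P ∧ ISVert.orig v ∉ P ∧
              G'.Adj (ISVert.orig u) (ISVert.orig v) then 1 else 0)
            = ∑ v : V, if ISVert.orig v ∉ P ∧
              G'.Adj (ISVert.orig u) (ISVert.orig v) then 1 else 0 := fun u => by
          rw [← Finset.sum_add_distrib]
          exact Finset.sum_congr rfl fun v _ => by
            by_cases hu' : ISVert.orig u ∈ P <;> by_cases hv' : ISVert.orig v ∈ P <;>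
              simp [hu', hv']
        rw [← Finset.sum_add_distrib, Finset.sum_congr rfl fun u _ => hrows u, Finset.sum_comm]
        exact Finset.sum_congr rfl fun v _ => by
          by_cases hv : ISVert.orig v ∈ P <;> simp [hv, hdegG2' v]
      have hdTdU : (∑ v : V, if ISVert.orig v ∈ P then G.degree v else 0)
          + (∑ v : V, if ISVert.orig v ∉ P then G.degree v else 0)
          = 2 * G.edgeFinset.card := by
        rw [← Finset.sum_add_distrib, ← SimpleGraph.sum_degrees_eq_twice_card_edges]
        exact Finset.sum_congr rfl fun v _ => by by_cases hv : ISVert.orig v ∈ P <;> simp [hv]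
      by_cases hs : ISVert.star ∈ P
      · simp only [hs, not_true, and_false, if_false, true_and, Finset.sum_const_zero,
          add_zero, hsx0] at hcut
        rw [hsub] at hcut
        set U : Finset V := Finset.univ.filter (fun v => ISVert.orig v ∉ P) with hUdef
        have hUcard : U.card = ∑ v : V, if ISVert.orig v ∉ P then 1 else 0 :=
          Finset.card_filter _ _
        have hUpairs : (∑ u ∈ U, ∑ v ∈ U, if G.Adj u v then 1 else 0)
            = ∑ u : V, ∑ v : V,
              if ISVert.orig u ∉ P ∧ ISVert.orig v ∉ P ∧
                G'.Adj (ISVert.orig u) (ISVert.orig v) then 1 else 0 := by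
          rw [hUdef, Finset.sum_filter]
          refine Finset.sum_congr rfl fun u _ => ?_
          by_cases hu : ISVert.orig u ∈ P
          · simp [hu]
          · simp only [hu, not_false_eq_true, if_true, true_and, Finset.sum_filter]
            refine Finset.sum_congr rfl fun v _ => ?_
            by_cases hv : ISVert.orig v ∈ P
            · simp [hv]
            · by_cases hadj : G.Adj u v
              · simp [hv, hadj, (h1 u v).mpr hadj]
              · have hadj' : ¬ G'.Adj (ISVert.orig u) (ISVert.orig v) :=
                  fun hh => hadj ((h1 u v).mp hh)
                simp [hv, hadj, hadj']
        obtain ⟨T, hTU, hTind, hTcard⟩ := exists_indep G U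
        rw [hUpairs, hUcard] at hTcard
        refine ⟨T, ?_, hTind⟩
        linarith [hcut, hOOkey, hdTdU, hTcard, hd]
      · simp only [hs, not_false_eq_true, and_true, false_and, if_false,
          Finset.sum_const_zero, add_zero] at hcut
        exfalso
        have hcT : (∑ v : V, if ISVert.orig v ∈ P then 1 else 0) ≤ Fintype.card V := by
          calc (∑ v : V, if ISVert.orig v ∈ P then 1 else 0) ≤ ∑ _v : V, 1 :=
              Finset.sum_le_sum fun v _ => by split_ifs <;> omega
            _ = Fintype.card V := by simp
        have hle : (∑ u : V, ∑ v : V,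
            if ISVert.orig u ∈ P ∧ ISVert.orig v ∉ P ∧
              G'.Adj (ISVert.orig u) (ISVert.orig v) then 1 else 0)
            ≤ ∑ v : V, if ISVert.orig v ∉ P then G.degree v else 0 :=
          le_trans (Nat.le_add_right _ _) (le_of_eq hOOkey)
        linarith [hcut, hle, hdTdU, hcT]
    have hgt0 := hgt
    rw [cut_expand G' h6 h7 h8 h9 X'] at hgt
    simp only [h2, h2', h4, h4', and_true, true_and] at hgt
    have hAdjSum : (∑ u : V, ∑ v : V,
          if G'.Adj (ISVert.orig u) (ISVert.orig v) then 1 else 0)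
        = 2 * G.edgeFinset.card := by
      simp only [hdegG1']; exact G.sum_degrees_eq_twice_card_edges
    have b_oo : (∑ u : V, ∑ v : V,
          if ISVert.orig u ∈ X' ∧ ISVert.orig v ∉ X' ∧
            G'.Adj (ISVert.orig u) (ISVert.orig v) then 1 else 0)
        ≤ 2 * G.edgeFinset.card := by
      rw [← hAdjSum]
      refine Finset.sum_le_sum fun u _ => Finset.sum_le_sum fun v _ => ?_
      by_cases ha : G'.Adj (ISVert.orig u) (ISVert.orig v)
      · simp only [ha, and_true, if_true]
        split_ifs <;> omega
      · simp [ha]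
    have b_oxxo : (∑ v : V, ∑ i : Fin (Fintype.card V ^ 3),
          if ISVert.orig v ∈ X' ∧ ISVert.x i ∉ X' ∧ G'.Adj (ISVert.orig v) (ISVert.x i)
          then 1 else 0)
        + (∑ i : Fin (Fintype.card V ^ 3), ∑ v : V,
          if ISVert.x i ∈ X' ∧ ISVert.orig v ∉ X' ∧ G'.Adj (ISVert.x i) (ISVert.orig v)
          then 1 else 0)
        ≤ 2 * G.edgeFinset.card := by
      have hswap : (∑ i : Fin (Fintype.card V ^ 3), ∑ v : V,
            if ISVert.x i ∈ X' ∧ ISVert.orig v ∉ X' ∧ G'.Adj (ISVert.x i) (ISVert.orig v)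
            then 1 else 0)
          = ∑ v : V, ∑ i : Fin (Fintype.card V ^ 3),
            if ISVert.x i ∈ X' ∧ ISVert.orig v ∉ X' ∧ G'.Adj (ISVert.x i) (ISVert.orig v)
            then 1 else 0 := Finset.sum_comm
      rw [hswap, ← Finset.sum_add_distrib]
      have hstep : ∀ v : V, ((∑ i : Fin (Fintype.card V ^ 3),
            if ISVert.orig v ∈ X' ∧ ISVert.x i ∉ X' ∧ G'.Adj (ISVert.orig v) (ISVert.x i)
            then 1 else 0)
          + (∑ i : Fin (Fintype.card V ^ 3),
            if ISVert.x i ∈ X' ∧ ISVert.orig v ∉ X' ∧ G'.Adj (ISVert.x i) (ISVert.orig v)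
            then 1 else 0)) ≤ G.degree v := fun v => by
        rw [← Finset.sum_add_distrib, ← hdeg v]
        refine Finset.sum_le_sum fun i _ => ?_
        by_cases ha : G'.Adj (ISVert.orig v) (ISVert.x i)
        · by_cases hp : ISVert.orig v ∈ X' <;> by_cases hq : ISVert.x i ∈ X' <;>
            simp [hp, hq, ha, ha.symm]
        · have ha' : ¬ G'.Adj (ISVert.x i) (ISVert.orig v) := fun h => ha h.symm
          simp [ha, ha']
      calc (∑ v : V, _) ≤ ∑ v : V, G.degree v := Finset.sum_le_sum fun v _ => hstep v
        _ = 2 * G.edgeFinset.card := G.sum_degrees_eq_twice_card_edges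
    have b_osso : (∑ v : V, if ISVert.orig v ∈ X' ∧ ISVert.star ∉ X' then 1 else 0)
        + (∑ v : V, if ISVert.star ∈ X' ∧ ISVert.orig v ∉ X' then 1 else 0)
        ≤ Fintype.card V := by
      rw [← Finset.sum_add_distrib]
      calc (∑ v : V, _) ≤ ∑ _v : V, 1 := Finset.sum_le_sum fun v _ => by
            by_cases hp : ISVert.orig v ∈ X' <;> by_cases hq : ISVert.star ∈ X' <;>
              simp [hp, hq]
        _ = Fintype.card V := by simp
    have b_xssx : (∑ i : Fin (Fintype.card V ^ 3),
          if ISVert.x i ∈ X' ∧ ISVert.star ∉ X' ∧ G'.Adj (ISVert.x i) ISVert.star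
          then 1 else 0)
        + (∑ i : Fin (Fintype.card V ^ 3),
          if ISVert.star ∈ X' ∧ ISVert.x i ∉ X' ∧ G'.Adj ISVert.star (ISVert.x i)
          then 1 else 0)
        ≤ Fintype.card V - k + 1 := by
      rw [← Finset.sum_add_distrib, ← hsx0]
      refine Finset.sum_le_sum fun i _ => ?_
      by_cases ha : G'.Adj ISVert.star (ISVert.x i)
      · by_cases hp : ISVert.x i ∈ X' <;> by_cases hq : ISVert.star ∈ X' <;>
          simp [hp, hq, ha, ha.symm]
      · have ha' : ¬ G'.Adj (ISVert.x i) ISVert.star := fun h => ha h.symm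
        simp [ha, ha']
    have e_xy : (∑ i : Fin (Fintype.card V ^ 3), ∑ j : Fin (Fintype.card V ^ 3),
          if ISVert.x i ∈ X' ∧ ISVert.y j ∉ X' then 1 else 0)
        = (∑ i : Fin (Fintype.card V ^ 3), if ISVert.x i ∈ X' then 1 else 0)
          * (∑ j : Fin (Fintype.card V ^ 3), if ISVert.y j ∉ X' then 1 else 0) := by
      rw [Finset.sum_mul_sum]
      exact Finset.sum_congr rfl fun i _ => Finset.sum_congr rfl fun j _ => by
        by_cases hp : ISVert.x i ∈ X' <;> by_cases hq : ISVert.y j ∈ X' <;> simp [hp, hq]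
    have e_yx : (∑ j : Fin (Fintype.card V ^ 3), ∑ i : Fin (Fintype.card V ^ 3),
          if ISVert.y j ∈ X' ∧ ISVert.x i ∉ X' then 1 else 0)
        = (∑ j : Fin (Fintype.card V ^ 3), if ISVert.y j ∈ X' then 1 else 0)
          * (∑ i : Fin (Fintype.card V ^ 3), if ISVert.x i ∉ X' then 1 else 0) := by
      rw [Finset.sum_mul_sum]
      exact Finset.sum_congr rfl fun j _ => Finset.sum_congr rfl fun i _ => by
        by_cases hp : ISVert.y j ∈ X' <;> by_cases hq : ISVert.x i ∈ X' <;> simp [hp, hq]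
    rw [e_xy, e_yx] at hgt
    have hax : (∑ i : Fin (Fintype.card V ^ 3), if ISVert.x i ∈ X' then 1 else 0)
        + (∑ i : Fin (Fintype.card V ^ 3), if ISVert.x i ∉ X' then 1 else 0)
        = Fintype.card V ^ 3 := by
      rw [← Finset.sum_add_distrib]
      calc (∑ i : Fin (Fintype.card V ^ 3), _) = ∑ _i : Fin (Fintype.card V ^ 3), 1 :=
          Finset.sum_congr rfl fun i _ => by by_cases hp : ISVert.x i ∈ X' <;> simp [hp]
        _ = Fintype.card V ^ 3 := by simp
    have hbx : (∑ j : Fin (Fintype.card V ^ 3), if ISVert.y j ∈ X' then 1 else 0)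
        + (∑ j : Fin (Fintype.card V ^ 3), if ISVert.y j ∉ X' then 1 else 0)
        = Fintype.card V ^ 3 := by
      rw [← Finset.sum_add_distrib]
      calc (∑ j : Fin (Fintype.card V ^ 3), _) = ∑ _j : Fin (Fintype.card V ^ 3), 1 :=
          Finset.sum_congr rfl fun j _ => by by_cases hp : ISVert.y j ∈ X' <;> simp [hp]
        _ = Fintype.card V ^ 3 := by simp
    have hscen : ((∀ i, ISVert.x i ∈ X') ∧ (∀ j, ISVert.y j ∉ X'))
        ∨ ((∀ i, ISVert.x i ∉ X') ∧ (∀ j, ISVert.y j ∈ X')) := by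
      by_contra hcon
      have hmain : ¬((((∑ i : Fin (Fintype.card V ^ 3), if ISVert.x i ∉ X' then 1 else 0) = 0)
            ∧ ((∑ j : Fin (Fintype.card V ^ 3), if ISVert.y j ∈ X' then 1 else 0) = 0))
          ∨ (((∑ i : Fin (Fintype.card V ^ 3), if ISVert.x i ∈ X' then 1 else 0) = 0)
            ∧ ((∑ j : Fin (Fintype.card V ^ 3), if ISVert.y j ∉ X' then 1 else 0) = 0))) := by
        rintro (⟨hc0, hb0⟩ | ⟨ha0, hd0⟩)
        · refine hcon (Or.inl ⟨fun i => ?_, fun j hyj => ?_⟩)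
          · by_contra hxi
            have := Finset.sum_eq_zero_iff.mp hc0 i (Finset.mem_univ i)
            rw [if_pos hxi] at this
            exact one_ne_zero this
          · have := Finset.sum_eq_zero_iff.mp hb0 j (Finset.mem_univ j)
            rw [if_pos hyj] at this
            exact one_ne_zero this
        · refine hcon (Or.inr ⟨fun i hxi => ?_, fun j => ?_⟩)
          · have := Finset.sum_eq_zero_iff.mp ha0 i (Finset.mem_univ i)
            rw [if_pos hxi] at this
            exact one_ne_zero this
          · by_contra hyj
            have := Finset.sum_eq_zero_iff.mp hd0 j (Finset.mem_univ j)
            rw [if_pos hyj] at this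
            exact one_ne_zero this
      have hab := ab_bound
        (∑ i : Fin (Fintype.card V ^ 3), if ISVert.x i ∈ X' then 1 else 0)
        (∑ i : Fin (Fintype.card V ^ 3), if ISVert.x i ∉ X' then 1 else 0)
        (∑ j : Fin (Fintype.card V ^ 3), if ISVert.y j ∈ X' then 1 else 0)
        (∑ j : Fin (Fintype.card V ^ 3), if ISVert.y j ∉ X' then 1 else 0)
        (Fintype.card V ^ 3) hax hbx hmain
      have hNN6 : (Fintype.card V ^ 3) * (Fintype.card V ^ 3) = Fintype.card V ^ 6 := by ring
      rw [hNN6] at hab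
      have hm : 2 * G.edgeFinset.card ≤ Fintype.card V * Fintype.card V := by
        have hb : ∀ v : V, G.degree v ≤ Fintype.card V := fun v =>
          Finset.card_le_univ (G.neighborFinset v)
        calc 2 * G.edgeFinset.card = ∑ v : V, G.degree v :=
            (G.sum_degrees_eq_twice_card_edges).symm
          _ ≤ ∑ _v : V, Fintype.card V := Finset.sum_le_sum fun v _ => hb v
          _ = Fintype.card V * Fintype.card V := by
            rw [Finset.sum_const, Finset.card_univ, smul_eq_mul]
      have hcube : Fintype.card V * Fintype.card V + Fintype.card V + 1
          ≤ Fintype.card V ^ 3 := by nlinarith [hn2]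
      have hnk : Fintype.card V - k + 1 ≤ Fintype.card V := by omega
      linarith [hgt, b_oo, b_oxxo, b_osso, b_xssx, hab, hm, hcube, hnk]
    rcases hscen with ⟨hxin, hyout⟩ | ⟨hxout, hyin⟩
    · have hswap2 : cutSet G' X' X'ᶜ = cutSet G' X'ᶜ (X'ᶜ)ᶜ := by
        rw [compl_compl]; exact cutSet_comm G' X' X'ᶜ
      exact step2 X'ᶜ (fun i hxi => hxi (hxin i)) (fun j => hyout j)
        (by rw [← hswap2]; exact hgt0)
    · exact step2 X' hxout hyin hgt0
end
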